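/- arXiv:2402.09814 — 7 statements merged into one kernel-verified Lean document; each statement's English description precedes it below -/
import Mathlib

section
/- Let p ∈ (1, ∞), let n ≥ 1 be an integer, and let σ_n : ℝ^n → ℝ^n be given by σ_n(x) = |x|^{p−2} x (with σ_n(0) = 0). For every real δ > 0 there exists a constant c(δ) > 0, depending only on p and δ, such that for all x, y, z ∈ ℝ^n: (σ_n(x) − σ_n(z)) · (x − y) ≤ δ (σ_n(y) − σ_n(x)) · (y − x) + c(δ) (|x| + |z|)^{p−2} |x − z|^2, where the last term is interpreted as 0 when x = z (this covers the case p < 2 with x = z = 0). -/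
open Real

private lemma rpow_succ' {α q : ℝ} (hα : 0 ≤ α) (h : q + 1 ≠ 0) : α ^ q * α = α ^ (q + 1) := by
  rcases eq_or_lt_of_le hα with h0 | h0
  · simp [← h0, Real.zero_rpow h]
  · rw [Real.rpow_add_one h0.ne']

private lemma rpow_succ_pos {α q : ℝ} (hα : 0 < α) : α ^ q * α = α ^ (q + 1) :=
  (Real.rpow_add_one hα.ne' q).symm

/-- if 0 < x ≤ y ≤ K x then y^q ≤ max 1 (K^q) * x^q -/
private lemma rpow_base_le {q x y K : ℝ} (hx : 0 < x) (hK : 0 < K) (hxy : x ≤ y)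
    (hyK : y ≤ K * x) : y ^ q ≤ max 1 (K ^ q) * x ^ q := by
  rcases le_or_gt 0 q with hq | hq
  · calc y ^ q ≤ (K * x) ^ q := Real.rpow_le_rpow (hx.le.trans hxy) hyK hq
      _ = K ^ q * x ^ q := Real.mul_rpow hK.le hx.le
      _ ≤ max 1 (K ^ q) * x ^ q := by
        have := Real.rpow_nonneg hx.le q
        nlinarith [le_max_right 1 (K ^ q)]
  · calc y ^ q ≤ x ^ q := Real.rpow_le_rpow_of_nonpos hx hxy hq.le
      _ ≤ max 1 (K ^ q) * x ^ q := by
        have := Real.rpow_nonneg hx.le q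
        nlinarith [le_max_left 1 (K ^ q)]

/-- if 0 < x ≤ y ≤ K x then x^q ≤ max 1 (K^(-q)) * y^q -/
private lemma rpow_base_le' {q x y K : ℝ} (hx : 0 < x) (hK : 0 < K) (hxy : x ≤ y)
    (hyK : y ≤ K * x) : x ^ q ≤ max 1 (K ^ (-q)) * y ^ q := by
  rcases le_or_gt 0 q with hq | hq
  · have := Real.rpow_le_rpow hx.le hxy hq
    have := Real.rpow_nonneg (hx.le.trans hxy) q
    nlinarith [le_max_left 1 (K ^ (-q))]
  · have h1 : (K * x) ^ q ≤ y ^ q :=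
      Real.rpow_le_rpow_of_nonpos (hx.trans_le hxy) hyK hq.le
    have h2 : (K * x) ^ q = K ^ q * x ^ q := Real.mul_rpow hK.le hx.le
    have h3 : K ^ (-q) * K ^ q = 1 := by
      rw [← Real.rpow_add hK]; simp
    have h4 : (0:ℝ) < K ^ (-q) := Real.rpow_pos_of_pos hK _
    have h5 : x ^ q = K ^ (-q) * (K ^ q * x ^ q) := by
      rw [← mul_assoc, h3, one_mul]
    rw [h5]
    calc K ^ (-q) * (K ^ q * x ^ q) ≤ K ^ (-q) * y ^ q := by
          rw [← h2]; exact mul_le_mul_of_nonneg_left h1 h4.le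
      _ ≤ max 1 (K ^ (-q)) * y ^ q :=
          mul_le_mul_of_nonneg_right (le_max_right _ _) (Real.rpow_nonneg (hx.le.trans hxy) _)

private lemma scalarS3 {p : ℝ} (hp1 : 1 < p) : ∀ α β : ℝ, 0 ≤ α → 0 ≤ β →
    2 ^ (1 - p) * (α + β) ^ (p - 1) ≤ α ^ (p - 1) + β ^ (p - 1) := by
  have key : ∀ α β : ℝ, 0 ≤ β → β ≤ α →
      2 ^ (1 - p) * (α + β) ^ (p - 1) ≤ α ^ (p - 1) + β ^ (p - 1) := by
    intro α β hβ hβα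
    have hα : 0 ≤ α := hβ.trans hβα
    have h1 : (α + β) ^ (p - 1) ≤ (2 * α) ^ (p - 1) :=
      Real.rpow_le_rpow (by linarith) (by linarith) (by linarith)
    have h2 : (2 * α : ℝ) ^ (p - 1) = 2 ^ (p - 1) * α ^ (p - 1) :=
      Real.mul_rpow (by norm_num) hα
    have h3 : (2:ℝ) ^ (1 - p) * 2 ^ (p - 1) = 1 := by
      rw [← Real.rpow_add (by norm_num)]; norm_num
    have h4 : (0:ℝ) < 2 ^ (1 - p) := Real.rpow_pos_of_pos (by norm_num) _
    have h5 : 0 ≤ β ^ (p - 1) := Real.rpow_nonneg hβ _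
    calc 2 ^ (1 - p) * (α + β) ^ (p - 1) ≤ 2 ^ (1 - p) * (2 ^ (p - 1) * α ^ (p - 1)) := by
          rw [← h2]; exact mul_le_mul_of_nonneg_left h1 h4.le
      _ = α ^ (p - 1) := by rw [← mul_assoc, h3, one_mul]
      _ ≤ α ^ (p - 1) + β ^ (p - 1) := by linarith
  intro α β hα hβ
  rcases le_total β α with h | h
  · exact key α β hβ h
  · have := key β α hα h
    rw [add_comm β α] at this; linarith

private lemma scalarS2 {p : ℝ} (hp1 : 1 < p) : ∃ m : ℝ, 0 < m ∧ ∀ α β : ℝ, 0 ≤ β → β ≤ α →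
    m * ((α + β) ^ (p - 2) * (α - β)) ≤ α ^ (p - 1) - β ^ (p - 1) := by
  have h2p : (0:ℝ) < 1 - 2 ^ (1 - p) := by
    have : (2:ℝ) ^ (1 - p) < 1 :=
      Real.rpow_lt_one_of_one_lt_of_neg (by norm_num) (by linarith)
    linarith
  have hC1 : (0:ℝ) < max 1 ((2:ℝ) ^ (p - 2)) := lt_of_lt_of_le one_pos (le_max_left _ _)
  have hC2 : (0:ℝ) < max 1 ((4:ℝ) ^ (p - 2)) := lt_of_lt_of_le one_pos (le_max_left _ _)
  have hm0 : 0 < min ((1 - 2 ^ (1 - p)) / max 1 ((2:ℝ) ^ (p - 2)))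
      ((p - 1) / max 1 ((4:ℝ) ^ (p - 2))) :=
    lt_min (div_pos h2p hC1) (div_pos (by linarith) hC2)
  refine ⟨_, hm0, ?_⟩
  set m := min ((1 - 2 ^ (1 - p)) / max 1 ((2:ℝ) ^ (p - 2)))
      ((p - 1) / max 1 ((4:ℝ) ^ (p - 2))) with hm
  intro α β hβ hβα
  have hα : 0 ≤ α := hβ.trans hβα
  have hm1 : m * max 1 ((2:ℝ) ^ (p - 2)) ≤ 1 - 2 ^ (1 - p) := by
    calc m * max 1 ((2:ℝ) ^ (p-2))
        ≤ (1 - 2 ^ (1 - p)) / max 1 ((2:ℝ) ^ (p - 2)) * max 1 ((2:ℝ) ^ (p-2)) :=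
          mul_le_mul_of_nonneg_right (min_le_left _ _) hC1.le
      _ = 1 - 2 ^ (1 - p) := div_mul_cancel₀ _ hC1.ne'
  have hm2 : m * max 1 ((4:ℝ) ^ (p - 2)) ≤ p - 1 := by
    calc m * max 1 ((4:ℝ) ^ (p-2))
        ≤ (p - 1) / max 1 ((4:ℝ) ^ (p - 2)) * max 1 ((4:ℝ) ^ (p-2)) :=
          mul_le_mul_of_nonneg_right (min_le_right _ _) hC2.le
      _ = p - 1 := div_mul_cancel₀ _ hC2.ne'
  rcases eq_or_lt_of_le hβα with heq | hlt
  · rw [heq]; simp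
  have hα0 : 0 < α := lt_of_le_of_lt hβ hlt
  rcases le_or_gt (2 * β) α with hcase | hcase
  · -- β ≤ α/2
    have hβp : β ^ (p - 1) ≤ 2 ^ (1 - p) * α ^ (p - 1) := by
      have h1 : β ^ (p - 1) ≤ (2⁻¹ * α) ^ (p - 1) :=
        Real.rpow_le_rpow hβ (by linarith) (by linarith)
      have h2 : ((2:ℝ)⁻¹ * α) ^ (p - 1) = (2:ℝ)⁻¹ ^ (p - 1) * α ^ (p - 1) :=
        Real.mul_rpow (by norm_num) hα
      have h3 : ((2:ℝ)⁻¹) ^ (p - 1) = 2 ^ (1 - p) := by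
        rw [Real.inv_rpow (by norm_num : (0:ℝ) ≤ 2),
          ← Real.rpow_neg (by norm_num : (0:ℝ) ≤ 2)]
        ring_nf
      rw [h2, h3] at h1; exact h1
    have hbase : (α + β) ^ (p - 2) ≤ max 1 ((2:ℝ) ^ (p - 2)) * α ^ (p - 2) :=
      rpow_base_le hα0 (by norm_num) (by linarith) (by linarith)
    have hap : 0 ≤ α ^ (p - 2) := Real.rpow_nonneg hα _
    have hsucc : α ^ (p - 2) * α = α ^ (p - 1) := by
      rw [rpow_succ' hα (by intro h; linarith : p - 2 + 1 ≠ 0)]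
      congr 1; ring
    have hstep : (α + β) ^ (p - 2) * (α - β) ≤ max 1 ((2:ℝ) ^ (p - 2)) * α ^ (p - 1) := by
      calc (α + β) ^ (p - 2) * (α - β) ≤ (max 1 ((2:ℝ) ^ (p - 2)) * α ^ (p - 2)) * α := by
            apply mul_le_mul hbase (by linarith) (by linarith)
              (mul_nonneg hC1.le hap)
        _ = max 1 ((2:ℝ) ^ (p - 2)) * α ^ (p - 1) := by rw [mul_assoc, hsucc]
    have hA : 0 ≤ α ^ (p - 1) := Real.rpow_nonneg hα _
    nlinarith [mul_le_mul_of_nonneg_left hstep hm0.le,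
      mul_le_mul_of_nonneg_right hm1 hA]
  · -- α < 2β, MVT
    have hβ0 : 0 < β := by linarith
    obtain ⟨ξ, hξ, hslope⟩ := exists_hasDerivAt_eq_slope (fun x : ℝ => x ^ (p - 1))
      (fun x : ℝ => (p - 1) * x ^ (p - 2)) hlt
      (fun x _ => (Real.continuousAt_rpow_const x (p - 1)
        (Or.inr (by linarith))).continuousWithinAt)
      (fun x hx => by
        have h := Real.hasDerivAt_rpow_const (x := x) (p := p - 1)
          (Or.inl (ne_of_gt (hβ0.trans hx.1)))
        have h12 : p - 1 - 1 = p - 2 := by ring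
        rw [h12] at h; exact h)
    have hξ0 : 0 < ξ := hβ0.trans hξ.1
    have hdiff : α ^ (p - 1) - β ^ (p - 1) = (p - 1) * ξ ^ (p - 2) * (α - β) := by
      have hab : α - β ≠ 0 := ne_of_gt (by linarith)
      rw [eq_div_iff hab] at hslope
      linarith [hslope]
    have hbase : (α + β) ^ (p - 2) ≤ max 1 ((4:ℝ) ^ (p - 2)) * ξ ^ (p - 2) :=
      rpow_base_le hξ0 (by norm_num) (by linarith [hξ.2]) (by nlinarith [hξ.1])
    have hξp : 0 ≤ ξ ^ (p - 2) := Real.rpow_nonneg hξ0.le _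
    rw [hdiff]
    have h1 : m * (α + β) ^ (p - 2) ≤ (p - 1) * ξ ^ (p - 2) := by
      calc m * (α + β) ^ (p - 2) ≤ m * (max 1 ((4:ℝ) ^ (p - 2)) * ξ ^ (p - 2)) :=
            mul_le_mul_of_nonneg_left hbase hm0.le
        _ = m * max 1 ((4:ℝ) ^ (p - 2)) * ξ ^ (p - 2) := by ring
        _ ≤ (p - 1) * ξ ^ (p - 2) := mul_le_mul_of_nonneg_right hm2 hξp
    nlinarith [mul_le_mul_of_nonneg_right h1 (by linarith : (0:ℝ) ≤ α - β)]

private lemma scalarS1 {p : ℝ} (hp1 : 1 < p) : ∃ C : ℝ, 0 < C ∧ ∀ α β : ℝ, 0 ≤ β → β ≤ α →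
    |α ^ (p - 2) - β ^ (p - 2)| * β ≤ C * ((α + β) ^ (p - 2) * (α - β)) := by
  set q := p - 2 with hq
  have h2q : (0:ℝ) < 2 ^ (-(2*q)) := Real.rpow_pos_of_pos (by norm_num) _
  have h1q : (0:ℝ) < 2 ^ (1 - q) := Real.rpow_pos_of_pos (by norm_num) _
  refine ⟨|q| * (1 + 2 ^ (-(2*q))) + 2 ^ (1 - q) + 1, by positivity, ?_⟩
  set C := |q| * (1 + 2 ^ (-(2*q))) + 2 ^ (1 - q) + 1 with hC
  have hC0 : 0 < C := by positivity
  intro α β hβ hβα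
  have hα : 0 ≤ α := hβ.trans hβα
  rcases eq_or_lt_of_le hβ with hβ0 | hβ0
  · rw [← hβ0]
    simp only [mul_zero]
    exact mul_nonneg hC0.le (mul_nonneg (Real.rpow_nonneg (by linarith) _) (by linarith))
  rcases eq_or_lt_of_le hβα with heq | hlt
  · rw [heq]
    simp only [sub_self, abs_zero, zero_mul]
    exact mul_nonneg hC0.le (mul_nonneg (Real.rpow_nonneg (by linarith) _) (by linarith))
  have hα0 : 0 < α := hβ0.trans hlt
  have hsum : 0 < α + β := by linarith
  have hsq : 0 ≤ (α + β) ^ q := Real.rpow_nonneg hsum.le _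
  rcases lt_or_ge q 0 with hqneg | hqpos
  · -- q < 0
    have habs : |α ^ q - β ^ q| = β ^ q - α ^ q := by
      rw [abs_sub_comm]
      exact abs_of_nonneg (sub_nonneg.2 (Real.rpow_le_rpow_of_nonpos hβ0 hβα hqneg.le))
    have hαq : 0 ≤ α ^ q := Real.rpow_nonneg hα _
    have hαq' : α ^ q ≤ 2 ^ (-q) * (α + β) ^ q := by
      have h1 : (2 * α) ^ q ≤ (α + β) ^ q :=
        Real.rpow_le_rpow_of_nonpos hsum (by linarith) hqneg.le
      have h2 : ((2:ℝ) * α) ^ q = 2 ^ q * α ^ q := Real.mul_rpow (by norm_num) hα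
      have h3 : (2:ℝ) ^ (-q) * 2 ^ q = 1 := by
        rw [← Real.rpow_add (by norm_num)]; simp
      have h4 : (0:ℝ) < 2 ^ (-q) := Real.rpow_pos_of_pos (by norm_num) _
      calc α ^ q = 2 ^ (-q) * (2 ^ q * α ^ q) := by rw [← mul_assoc, h3, one_mul]
        _ ≤ 2 ^ (-q) * (α + β) ^ q := by
            rw [← h2]; exact mul_le_mul_of_nonneg_left h1 h4.le
    rcases le_or_gt (2 * β) α with hcase | hcase
    · -- β ≤ α/2 : crude bound
      have hβq1 : β ^ (q + 1) ≤ α ^ (q + 1) :=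
        Real.rpow_le_rpow hβ0.le hβα (by simp [hq]; linarith)
      have lhs_le : |α ^ q - β ^ q| * β ≤ α ^ (q + 1) := by
        rw [habs]
        have : (β ^ q - α ^ q) * β ≤ β ^ q * β := by nlinarith
        rw [rpow_succ_pos hβ0] at this
        linarith
      -- RHS ≥ 2^(1-q) ⁻¹ ... : C * ((α+β)^q (α-β)) ≥ 2^{1-q} * 2^{q-1} α^{q+1} = α^{q+1}
      have hge : 2 ^ (q - 1) * α ^ (q + 1) ≤ (α + β) ^ q * (α - β) := by
        have h1 : (2 * α) ^ q ≤ (α + β) ^ q :=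
          Real.rpow_le_rpow_of_nonpos hsum (by linarith) hqneg.le
        have h2 : ((2:ℝ) * α) ^ q = 2 ^ q * α ^ q := Real.mul_rpow (by norm_num) hα
        have h3 : α / 2 ≤ α - β := by linarith
        have hqα : 0 ≤ 2 ^ q * α ^ q := by positivity
        have h4 : 2 ^ q * α ^ q * (α / 2) ≤ (α + β) ^ q * (α - β) := by
          apply mul_le_mul (by rw [← h2]; exact h1) h3 (by linarith) hsq
        have h5 : α ^ q * α = α ^ (q + 1) := rpow_succ_pos hα0
        have h6 : (2:ℝ) ^ q * α ^ q * (α / 2) = 2 ^ q / 2 * α ^ (q + 1) := by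
          rw [← h5]; ring
        have h7 : (2:ℝ) ^ (q - 1) = 2 ^ q / 2 := by
          rw [Real.rpow_sub (by norm_num)]; norm_num
        rw [h7, ← h6]; exact h4
      have hCge : 2 ^ (1 - q) ≤ C := by
        have : (0:ℝ) ≤ |q| * (1 + 2 ^ (-(2*q))) := by positivity
        simp only [hC]; linarith
      have hmul : (2:ℝ) ^ (1 - q) * 2 ^ (q - 1) = 1 := by
        rw [← Real.rpow_add (by norm_num)]; norm_num
      have hA1 : 0 ≤ α ^ (q + 1) := Real.rpow_nonneg hα _
      calc |α ^ q - β ^ q| * β ≤ α ^ (q + 1) := lhs_le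
        _ = 2 ^ (1 - q) * (2 ^ (q - 1) * α ^ (q + 1)) := by
            rw [← mul_assoc, hmul, one_mul]
        _ ≤ 2 ^ (1 - q) * ((α + β) ^ q * (α - β)) :=
            mul_le_mul_of_nonneg_left hge h1q.le
        _ ≤ C * ((α + β) ^ q * (α - β)) := by
            apply mul_le_mul_of_nonneg_right hCge
            exact mul_nonneg hsq (by linarith)
    · -- α/2 < β : MVT
      obtain ⟨ξ, hξ, hslope⟩ := exists_hasDerivAt_eq_slope (fun x : ℝ => x ^ q)
        (fun x : ℝ => q * x ^ (q - 1)) hlt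
        (fun x hx => (Real.continuousAt_rpow_const x q
          (Or.inl (ne_of_gt (lt_of_lt_of_le hβ0 hx.1)))).continuousWithinAt)
        (fun x hx => Real.hasDerivAt_rpow_const (Or.inl (ne_of_gt (hβ0.trans hx.1))))
      have hξ0 : 0 < ξ := hβ0.trans hξ.1
      have hdiff : α ^ q - β ^ q = q * ξ ^ (q - 1) * (α - β) := by
        have hab : α - β ≠ 0 := ne_of_gt (by linarith)
        rw [eq_div_iff hab] at hslope
        linarith [hslope]
      have hξp : 0 ≤ ξ ^ (q - 1) := Real.rpow_nonneg hξ0.le _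
      have habs2 : |α ^ q - β ^ q| * β = |q| * ξ ^ (q - 1) * (α - β) * β := by
        rw [hdiff, abs_mul, abs_mul, abs_of_nonneg hξp, abs_of_nonneg (by linarith : (0:ℝ) ≤ α - β)]
      rw [habs2]
      -- ξ^{q-1} β ≤ β^q ≤ 2^{-2q} (α+β)^q
      have h1 : ξ ^ (q - 1) ≤ β ^ (q - 1) :=
        Real.rpow_le_rpow_of_nonpos hβ0 hξ.1.le (by linarith)
      have h2 : ξ ^ (q - 1) * β ≤ β ^ q := by
        have := mul_le_mul_of_nonneg_right h1 hβ0.le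
        rwa [rpow_succ' hβ0.le (by intro h; exact absurd (by linarith : q = 1) (by linarith)),
          sub_add_cancel] at this
      have h3 : β ^ q ≤ 2 ^ (-q) * α ^ q := by
        have hh : β ^ q ≤ (α / 2) ^ q :=
          Real.rpow_le_rpow_of_nonpos (by linarith) (by linarith) hqneg.le
        have hh2 : ((α:ℝ) / 2) ^ q = (2:ℝ)⁻¹ ^ q * α ^ q := by
          rw [div_eq_inv_mul, Real.mul_rpow (by norm_num) hα]
        have hh3 : ((2:ℝ)⁻¹) ^ q = 2 ^ (-q) := by
          rw [Real.inv_rpow (by norm_num : (0:ℝ) ≤ 2), ← Real.rpow_neg (by norm_num : (0:ℝ) ≤ 2)]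
        rw [hh2, hh3] at hh; exact hh
      have h4 : (0:ℝ) < 2 ^ (-q) := Real.rpow_pos_of_pos (by norm_num) _
      have h5 : β ^ q ≤ 2 ^ (-(2*q)) * (α + β) ^ q := by
        have := mul_le_mul_of_nonneg_left hαq' h4.le
        have he : (2:ℝ) ^ (-q) * 2 ^ (-q) = 2 ^ (-(2*q)) := by
          rw [← Real.rpow_add (by norm_num)]; ring_nf
        calc β ^ q ≤ 2 ^ (-q) * α ^ q := h3
          _ ≤ 2 ^ (-q) * (2 ^ (-q) * (α + β) ^ q) := mul_le_mul_of_nonneg_left hαq' h4.le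
          _ = 2 ^ (-(2*q)) * (α + β) ^ q := by rw [← mul_assoc, he]
      have hCge : |q| * 2 ^ (-(2*q)) ≤ C := by
        have h0 : (0:ℝ) ≤ |q| := abs_nonneg q
        simp only [hC]; nlinarith
      calc |q| * ξ ^ (q - 1) * (α - β) * β = |q| * (ξ ^ (q - 1) * β) * (α - β) := by ring
        _ ≤ |q| * (2 ^ (-(2*q)) * (α + β) ^ q) * (α - β) := by
            apply mul_le_mul_of_nonneg_right _ (by linarith : (0:ℝ) ≤ α - β)
            exact mul_le_mul_of_nonneg_left (h2.trans h5) (abs_nonneg q)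
        _ = |q| * 2 ^ (-(2*q)) * ((α + β) ^ q * (α - β)) := by ring
        _ ≤ C * ((α + β) ^ q * (α - β)) := by
            apply mul_le_mul_of_nonneg_right hCge
            exact mul_nonneg hsq (by linarith)
  · -- 0 ≤ q : MVT
    obtain ⟨ξ, hξ, hslope⟩ := exists_hasDerivAt_eq_slope (fun x : ℝ => x ^ q)
      (fun x : ℝ => q * x ^ (q - 1)) hlt
      (fun x hx => (Real.continuousAt_rpow_const x q
        (Or.inl (ne_of_gt (lt_of_lt_of_le hβ0 hx.1)))).continuousWithinAt)
      (fun x hx => Real.hasDerivAt_rpow_const (Or.inl (ne_of_gt (hβ0.trans hx.1))))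
    have hξ0 : 0 < ξ := hβ0.trans hξ.1
    have hdiff : α ^ q - β ^ q = q * ξ ^ (q - 1) * (α - β) := by
      have hab : α - β ≠ 0 := ne_of_gt (by linarith)
      rw [eq_div_iff hab] at hslope
      linarith [hslope]
    have hξp : 0 ≤ ξ ^ (q - 1) := Real.rpow_nonneg hξ0.le _
    have habs2 : |α ^ q - β ^ q| * β = |q| * ξ ^ (q - 1) * (α - β) * β := by
      rw [hdiff, abs_mul, abs_mul, abs_of_nonneg hξp, abs_of_nonneg (by linarith : (0:ℝ) ≤ α - β)]
    rw [habs2]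
    have key : ξ ^ (q - 1) * β ≤ (α + β) ^ q := by
      rcases le_or_gt 1 q with hq1 | hq1
      · have h1 : ξ ^ (q - 1) ≤ (α + β) ^ (q - 1) :=
          Real.rpow_le_rpow hξ0.le (by linarith [hξ.2]) (by linarith)
        calc ξ ^ (q - 1) * β ≤ (α + β) ^ (q - 1) * (α + β) := by
              apply mul_le_mul h1 (by linarith) hβ0.le (Real.rpow_nonneg hsum.le _)
          _ = (α + β) ^ q := by
              rw [rpow_succ_pos hsum, sub_add_cancel]
      · have h1 : ξ ^ (q - 1) ≤ β ^ (q - 1) :=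
          Real.rpow_le_rpow_of_nonpos hβ0 hξ.1.le (by linarith)
        have h2 : ξ ^ (q - 1) * β ≤ β ^ q := by
          have := mul_le_mul_of_nonneg_right h1 hβ0.le
          rwa [rpow_succ_pos hβ0, sub_add_cancel] at this
        exact h2.trans (Real.rpow_le_rpow hβ0.le (by linarith) hqpos)
    have hCq : |q| ≤ C := by
      have h0 : (0:ℝ) ≤ |q| := abs_nonneg q
      simp only [hC]; nlinarith
    calc |q| * ξ ^ (q - 1) * (α - β) * β = |q| * (ξ ^ (q - 1) * β) * (α - β) := by ring
      _ ≤ |q| * (α + β) ^ q * (α - β) := by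
          apply mul_le_mul_of_nonneg_right _ (by linarith : (0:ℝ) ≤ α - β)
          exact mul_le_mul_of_nonneg_left key (abs_nonneg q)
      _ = |q| * ((α + β) ^ q * (α - β)) := by ring
      _ ≤ C * ((α + β) ^ q * (α - β)) := by
          apply mul_le_mul_of_nonneg_right hCq
          exact mul_nonneg hsq (by linarith)

private lemma rpow_pm2_mul {p γ : ℝ} (hp1 : 1 < p) (hγ : 0 ≤ γ) :
    γ ^ (p - 2) * γ = γ ^ (p - 1) := by
  have h := rpow_succ' hγ (q := p - 2) (by intro h; linarith)
  rw [show p - 2 + 1 = p - 1 by ring] at h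
  exact h

private lemma rpow_pm1_mul {p γ : ℝ} (hp1 : 1 < p) (hγ : 0 ≤ γ) :
    γ ^ (p - 1) * γ = γ ^ p := by
  have h := rpow_succ' hγ (q := p - 1) (by intro h; linarith)
  rw [show p - 1 + 1 = p by ring] at h
  exact h

/-- The power flux function `σₙ(x) = |x|^{p-2} x` (with `σₙ(0) = 0`,
which is automatic here since `‖0‖ ^ (p-2) • 0 = 0`). -/
noncomputable def sigmaFlux (p : ℝ) {n : ℕ} (x : EuclideanSpace ℝ (Fin n)) :
    EuclideanSpace ℝ (Fin n) :=
  ‖x‖ ^ (p - 2) • x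

private lemma fluxLip {p : ℝ} (hp1 : 1 < p) (n : ℕ) : ∃ M : ℝ, 0 < M ∧
    ∀ a b : EuclideanSpace ℝ (Fin n),
      ‖sigmaFlux p a - sigmaFlux p b‖ ≤ M * ((‖a‖ + ‖b‖) ^ (p - 2) * ‖a - b‖) := by
  obtain ⟨C, hC0, hS1⟩ := scalarS1 hp1
  have hMc : (0:ℝ) < max 1 ((2:ℝ) ^ (2 - p)) := lt_of_lt_of_le one_pos (le_max_left _ _)
  refine ⟨max 1 ((2:ℝ) ^ (2 - p)) + C, by positivity, ?_⟩
  have key : ∀ a b : EuclideanSpace ℝ (Fin n), ‖b‖ ≤ ‖a‖ →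
      ‖sigmaFlux p a - sigmaFlux p b‖ ≤
        (max 1 ((2:ℝ) ^ (2 - p)) + C) * ((‖a‖ + ‖b‖) ^ (p - 2) * ‖a - b‖) := by
    intro a b hba
    rcases eq_or_lt_of_le (norm_nonneg a) with ha0 | ha0
    · have ha : a = 0 := norm_eq_zero.1 ha0.symm
      have hb : b = 0 := norm_eq_zero.1 (le_antisymm (by rw [← ha0] at hba; exact hba)
        (norm_nonneg b))
      subst ha; subst hb
      simp [sigmaFlux]
    have hsum : 0 < ‖a‖ + ‖b‖ := by linarith [norm_nonneg b]
    have hsq : 0 ≤ (‖a‖ + ‖b‖) ^ (p - 2) := Real.rpow_nonneg hsum.le _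
    have hdec : sigmaFlux p a - sigmaFlux p b =
        ‖a‖ ^ (p - 2) • (a - b) + (‖a‖ ^ (p - 2) - ‖b‖ ^ (p - 2)) • b := by
      simp only [sigmaFlux, smul_sub, sub_smul]
      abel
    have hterm1 : ‖a‖ ^ (p - 2) ≤ max 1 ((2:ℝ) ^ (2 - p)) * (‖a‖ + ‖b‖) ^ (p - 2) := by
      have h := rpow_base_le' (q := p - 2) (y := ‖a‖ + ‖b‖) ha0 (by norm_num : (0:ℝ) < 2)
        (by linarith [norm_nonneg b]) (by linarith)
      rwa [show -(p - 2) = 2 - p by ring] at h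
    have hterm2 : |‖a‖ ^ (p - 2) - ‖b‖ ^ (p - 2)| * ‖b‖ ≤
        C * ((‖a‖ + ‖b‖) ^ (p - 2) * ‖a - b‖) := by
      calc |‖a‖ ^ (p - 2) - ‖b‖ ^ (p - 2)| * ‖b‖
          ≤ C * ((‖a‖ + ‖b‖) ^ (p - 2) * (‖a‖ - ‖b‖)) := hS1 _ _ (norm_nonneg b) hba
        _ ≤ C * ((‖a‖ + ‖b‖) ^ (p - 2) * ‖a - b‖) := by
            apply mul_le_mul_of_nonneg_left _ hC0.le
            exact mul_le_mul_of_nonneg_left (norm_sub_norm_le a b) hsq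
    calc ‖sigmaFlux p a - sigmaFlux p b‖
        ≤ ‖‖a‖ ^ (p - 2) • (a - b)‖ + ‖(‖a‖ ^ (p - 2) - ‖b‖ ^ (p - 2)) • b‖ := by
          rw [hdec]; exact norm_add_le _ _
      _ = ‖a‖ ^ (p - 2) * ‖a - b‖ + |‖a‖ ^ (p - 2) - ‖b‖ ^ (p - 2)| * ‖b‖ := by
          rw [norm_smul, norm_smul, Real.norm_eq_abs, Real.norm_eq_abs,
            abs_of_nonneg (Real.rpow_nonneg (norm_nonneg a) _)]
      _ ≤ max 1 ((2:ℝ) ^ (2 - p)) * (‖a‖ + ‖b‖) ^ (p - 2) * ‖a - b‖ +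
          C * ((‖a‖ + ‖b‖) ^ (p - 2) * ‖a - b‖) := by
          gcongr
      _ = (max 1 ((2:ℝ) ^ (2 - p)) + C) * ((‖a‖ + ‖b‖) ^ (p - 2) * ‖a - b‖) := by ring
  intro a b
  rcases le_total ‖b‖ ‖a‖ with h | h
  · exact key a b h
  · have h2 := key b a h
    rwa [norm_sub_rev, add_comm ‖b‖ ‖a‖, norm_sub_rev b a] at h2

private lemma monoCore {p : ℝ} (hp1 : 1 < p) {m₂ : ℝ} (hm₂0 : 0 < m₂)
    (hS2 : ∀ α β : ℝ, 0 ≤ β → β ≤ α →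
      m₂ * ((α + β) ^ (p - 2) * (α - β)) ≤ α ^ (p - 1) - β ^ (p - 1))
    (α β c : ℝ) (hα0 : 0 ≤ α) (hβ0 : 0 ≤ β) (hcabs : |c| ≤ α * β) :
    min m₂ (2 ^ (1 - p)) * ((α + β) ^ (p - 2) * (α ^ 2 - 2 * c + β ^ 2)) ≤
      α ^ (p - 2) * α ^ 2 + β ^ (p - 2) * β ^ 2 - (α ^ (p - 2) + β ^ (p - 2)) * c := by
  have h1p : (0:ℝ) < 2 ^ (1 - p) := Real.rpow_pos_of_pos (by norm_num) _
  set m := min m₂ ((2:ℝ) ^ (1 - p)) with hmdef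
  have hm0 : 0 < m := lt_min hm₂0 h1p
  rcases eq_or_lt_of_le (by linarith : (0:ℝ) ≤ α + β) with hs0 | hs0
  · have hα' : α = 0 := by linarith
    have hβ' : β = 0 := by linarith
    have hc' : c = 0 := by
      have h := hcabs; rw [hα'] at h; simpa using h
    rw [hα', hβ', hc']
    simp
  set T := (α + β) ^ (p - 2) with hT
  have hT0 : 0 ≤ T := Real.rpow_nonneg (by linarith) _
  have hE1 : ∀ u v : ℝ, 0 ≤ v → v ≤ u →
      m₂ * (((u + v) ^ (p - 2)) * (u - v)) ≤ u ^ (p - 2) * u - v ^ (p - 2) * v := by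
    intro u v hv huv
    have h := hS2 u v hv huv
    rwa [← rpow_pm2_mul hp1 (hv.trans huv), ← rpow_pm2_mul hp1 hv] at h
  have hEplus : m * (T * (α - β) ^ 2) ≤
      α ^ (p - 2) * α ^ 2 + β ^ (p - 2) * β ^ 2 - (α ^ (p - 2) + β ^ (p - 2)) * (α * β) := by
    have hmono : m * (T * (α - β) ^ 2) ≤ m₂ * (T * (α - β) ^ 2) :=
      mul_le_mul_of_nonneg_right (min_le_left _ _) (mul_nonneg hT0 (sq_nonneg _))
    rcases le_total β α with h | h
    · have h1 := mul_le_mul_of_nonneg_right (hE1 α β hβ0 h) (sub_nonneg.2 h)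
      nlinarith [h1]
    · have h1 := mul_le_mul_of_nonneg_right (hE1 β α hα0 h) (sub_nonneg.2 h)
      rw [add_comm β α] at h1
      nlinarith [h1]
  have hEminus : m * (T * (α + β) ^ 2) ≤
      α ^ (p - 2) * α ^ 2 + β ^ (p - 2) * β ^ 2 + (α ^ (p - 2) + β ^ (p - 2)) * (α * β) := by
    have h3 := scalarS3 hp1 α β hα0 hβ0
    rw [← rpow_pm2_mul hp1 hα0, ← rpow_pm2_mul hp1 hβ0,
      ← rpow_pm2_mul hp1 (by linarith : (0:ℝ) ≤ α + β)] at h3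
    have h4 := mul_le_mul_of_nonneg_right h3 (by linarith : (0:ℝ) ≤ α + β)
    have hmono : m * (T * (α + β) ^ 2) ≤ 2 ^ (1 - p) * (T * (α + β) ^ 2) :=
      mul_le_mul_of_nonneg_right (min_le_right _ _) (mul_nonneg hT0 (sq_nonneg _))
    nlinarith [h4]
  have hc1 : c ≤ α * β := (abs_le.1 hcabs).2
  have hc2 : -(α * β) ≤ c := (abs_le.1 hcabs).1
  rcases le_or_gt 0 (α ^ (p - 2) + β ^ (p - 2) - 2 * m * T) with hB | hB
  · have h := mul_le_mul_of_nonneg_left hc1 hB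
    nlinarith [hEplus, h]
  · have h := mul_le_mul_of_nonpos_left hc2 hB.le
    nlinarith [hEminus, h]

private lemma fluxMono {p : ℝ} (hp1 : 1 < p) (n : ℕ) : ∃ m : ℝ, 0 < m ∧
    ∀ a b : EuclideanSpace ℝ (Fin n),
      m * ((‖a‖ + ‖b‖) ^ (p - 2) * ‖a - b‖ ^ 2) ≤
        (inner ℝ (sigmaFlux p a - sigmaFlux p b) (a - b) : ℝ) := by
  obtain ⟨m₂, hm₂0, hS2⟩ := scalarS2 hp1
  have h1p : (0:ℝ) < 2 ^ (1 - p) := Real.rpow_pos_of_pos (by norm_num) _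
  refine ⟨min m₂ (2 ^ (1 - p)), lt_min hm₂0 h1p, ?_⟩
  intro a b
  have hexp : (inner ℝ (sigmaFlux p a - sigmaFlux p b) (a - b) : ℝ) =
      ‖a‖ ^ (p - 2) * ‖a‖ ^ 2 + ‖b‖ ^ (p - 2) * ‖b‖ ^ 2 -
        (‖a‖ ^ (p - 2) + ‖b‖ ^ (p - 2)) * (inner ℝ a b : ℝ) := by
    simp only [sigmaFlux, inner_sub_left, inner_sub_right, real_inner_smul_left,
      real_inner_self_eq_norm_sq, real_inner_comm b a]
    ring
  have hnorm : ‖a - b‖ ^ 2 = ‖a‖ ^ 2 - 2 * (inner ℝ a b : ℝ) + ‖b‖ ^ 2 :=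
    norm_sub_sq_real a b
  rw [hexp, hnorm]
  exact monoCore hp1 hm₂0 hS2 ‖a‖ ‖b‖ _ (norm_nonneg a) (norm_nonneg b)
    (abs_real_inner_le_norm a b)

private lemma mainCore {p : ℝ} (hp1 : 1 < p) {δ M m : ℝ} (hδ : 0 < δ) (hM0 : 0 < M)
    (hm0 : 0 < m) :
    ∃ c : ℝ, 0 < c ∧ ∀ s t d e : ℝ, 0 ≤ d → 0 ≤ e → d ≤ s → e ≤ t →
      s ≤ 2 * t + d → t - 2 * s ≤ e →
      M * (s ^ (p - 2) * d) * e ≤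
        δ * (m * (t ^ (p - 2) * e ^ 2)) + c * (s ^ (p - 2) * d ^ 2) := by
  set δ₀ := δ * m / M with hδ₀def
  have hδ₀ : 0 < δ₀ := div_pos (mul_pos hδ hm0) hM0
  have hMδ : M * δ₀ = δ * m := by
    rw [hδ₀def]; field_simp
  set K' := max 4 ((2 / δ₀) ^ (1 / (p - 1))) with hK'def
  have hK4 : (4:ℝ) ≤ K' := le_max_left _ _
  have hK0 : (0:ℝ) < K' := lt_of_lt_of_le (by norm_num) hK4
  set K := max ((3:ℝ) ^ (p - 2)) (K' ^ (2 - p)) with hKdef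
  have hKpos : 0 < K := lt_of_lt_of_le (Real.rpow_pos_of_pos (by norm_num) _) (le_max_left _ _)
  set N := max 1 (K / δ₀) with hNdef
  have hN1 : (1:ℝ) ≤ N := le_max_left _ _
  have hN0 : (0:ℝ) < N := lt_of_lt_of_le one_pos hN1
  have hNK : K ≤ N * δ₀ := by
    have h := le_max_right 1 (K / δ₀)
    calc K = K / δ₀ * δ₀ := by field_simp
      _ ≤ N * δ₀ := mul_le_mul_of_nonneg_right h hδ₀.le
  have hK1 : (3:ℝ) ^ (p - 2) ≤ K := le_max_left _ _
  have hK'2 : (2 / δ₀) ^ (1 / (p - 1)) ≤ K' := le_max_right _ _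
  have hK2 : K' ^ (2 - p) ≤ K := le_max_right _ _
  clear_value δ₀ K' K N
  refine ⟨M * N + 1, by positivity, ?_⟩
  intro s t d e hd0 he0 hds het hs2t hts
  have hs0 : 0 ≤ s := hd0.trans hds
  have ht0 : 0 ≤ t := he0.trans het
  have hsp : 0 ≤ s ^ (p - 2) := Real.rpow_nonneg hs0 _
  have htp : 0 ≤ t ^ (p - 2) := Real.rpow_nonneg ht0 _
  have hδterm : 0 ≤ δ * (m * (t ^ (p - 2) * e ^ 2)) := by positivity
  have hsd2 : 0 ≤ s ^ (p - 2) * d ^ 2 := by positivity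
  have hcterm : 0 ≤ (M * N + 1) * (s ^ (p - 2) * d ^ 2) := by positivity
  rcases eq_or_lt_of_le hd0 with hdz | hdz
  · rw [← hdz]
    simp only [mul_zero, zero_mul]
    linarith
  have hspos : 0 < s := lt_of_lt_of_le hdz hds
  rcases le_or_gt e (N * d) with hcase1 | hcase1
  · -- case (i): e ≤ N d
    have h1 : M * (s ^ (p - 2) * d) * e ≤ M * (s ^ (p - 2) * d) * (N * d) :=
      mul_le_mul_of_nonneg_left hcase1 (by positivity)
    linarith [h1, hδterm, hsd2]
  have hepos : 0 < e := lt_of_le_of_lt (by positivity) hcase1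
  have htpos : 0 < t := lt_of_lt_of_le hepos het
  have hdte : d ≤ t := by nlinarith [hcase1.le]
  rcases le_or_gt t (K' * s) with hcase2 | hcase2
  · -- case (ii): t ≤ K' s  and e > N d
    have hs3t : s ≤ 3 * t := by linarith
    have hcomp : s ^ (p - 2) ≤ K * t ^ (p - 2) := by
      rcases le_or_gt 2 p with hp2 | hp2
      · have h1 : s ^ (p - 2) ≤ (3 * t) ^ (p - 2) :=
          Real.rpow_le_rpow hs0 hs3t (by linarith)
        have h2 : ((3:ℝ) * t) ^ (p - 2) = 3 ^ (p - 2) * t ^ (p - 2) :=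
          Real.mul_rpow (by norm_num) ht0
        calc s ^ (p - 2) ≤ 3 ^ (p - 2) * t ^ (p - 2) := by rw [← h2]; exact h1
          _ ≤ K * t ^ (p - 2) := mul_le_mul_of_nonneg_right hK1 htp
      · have h1 : (K' * s) ^ (p - 2) ≤ t ^ (p - 2) :=
          Real.rpow_le_rpow_of_nonpos htpos hcase2 (by linarith)
        have h2 : (K' * s) ^ (p - 2) = K' ^ (p - 2) * s ^ (p - 2) :=
          Real.mul_rpow hK0.le hs0
        have h3 : K' ^ (2 - p) * K' ^ (p - 2) = 1 := by
          rw [← Real.rpow_add hK0]; norm_num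
        have h4 : (0:ℝ) < K' ^ (2 - p) := Real.rpow_pos_of_pos hK0 _
        calc s ^ (p - 2) = K' ^ (2 - p) * (K' ^ (p - 2) * s ^ (p - 2)) := by
              rw [← mul_assoc, h3, one_mul]
          _ ≤ K' ^ (2 - p) * t ^ (p - 2) := by
              rw [← h2]; exact mul_le_mul_of_nonneg_left h1 h4.le
          _ ≤ K * t ^ (p - 2) := mul_le_mul_of_nonneg_right hK2 htp
    have hA : M * (s ^ (p - 2) * d) * e * N ≤ M * s ^ (p - 2) * e * e := by
      have h := mul_le_mul_of_nonneg_left hcase1.le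
        (by positivity : (0:ℝ) ≤ M * s ^ (p - 2) * e)
      nlinarith [h]
    have hB2 : M * s ^ (p - 2) * (e * e) ≤ M * (K * t ^ (p - 2)) * (e * e) :=
      mul_le_mul_of_nonneg_right (mul_le_mul_of_nonneg_left hcomp hM0.le)
        (mul_nonneg he0 he0)
    have hD2 : K * (M * t ^ (p - 2) * (e * e)) ≤ N * δ₀ * (M * t ^ (p - 2) * (e * e)) :=
      mul_le_mul_of_nonneg_right hNK (by positivity)
    have hH2 : M * δ₀ * N * (t ^ (p - 2) * (e * e)) = δ * m * N * (t ^ (p - 2) * (e * e)) := by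
      rw [hMδ]
    have hfinal : (M * (s ^ (p - 2) * d) * e) * N ≤ (δ * (m * (t ^ (p - 2) * e ^ 2))) * N := by
      linarith [hA, hB2, hD2, hH2]
    have hmain := le_of_mul_le_mul_right hfinal hN0
    linarith
  · -- case (iii): t > K' s
    have h1' : s ^ (p - 2) * d ≤ s ^ (p - 1) := by
      have h := mul_le_mul_of_nonneg_left hds hsp
      rwa [rpow_pm2_mul hp1 hs0] at h
    have h2' : K' ^ (p - 1) * s ^ (p - 1) ≤ t ^ (p - 1) := by
      have h := Real.rpow_le_rpow (mul_nonneg hK0.le hs0) hcase2.le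
        (by linarith : (0:ℝ) ≤ p - 1)
      rwa [Real.mul_rpow hK0.le hs0] at h
    have h3 : t ≤ 2 * e := by
      have h4s : 4 * s ≤ K' * s := mul_le_mul_of_nonneg_right hK4 hs0
      linarith
    have hPd : 2 ≤ δ₀ * K' ^ (p - 1) := by
      have h := Real.rpow_le_rpow (Real.rpow_nonneg (by positivity) _) hK'2
        (by linarith : (0:ℝ) ≤ p - 1)
      rw [← Real.rpow_mul (by positivity : (0:ℝ) ≤ 2 / δ₀), one_div,
        inv_mul_cancel₀ (by intro h0; linarith : p - 1 ≠ 0), Real.rpow_one] at h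
      rw [div_le_iff₀ hδ₀] at h
      linarith [h]
    have hsP : 0 ≤ s ^ (p - 1) := Real.rpow_nonneg hs0 _
    have sA : 2 * s ^ (p - 1) ≤ δ₀ * K' ^ (p - 1) * s ^ (p - 1) :=
      mul_le_mul_of_nonneg_right hPd hsP
    have sB : δ₀ * (K' ^ (p - 1) * s ^ (p - 1)) ≤ δ₀ * t ^ (p - 1) :=
      mul_le_mul_of_nonneg_left h2' hδ₀.le
    have sD : t ^ (p - 1) ≤ t ^ (p - 2) * (2 * e) := by
      have h := mul_le_mul_of_nonneg_left h3 htp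
      rwa [rpow_pm2_mul hp1 ht0] at h
    have sE : 2 * s ^ (p - 1) ≤ δ₀ * (t ^ (p - 2) * (2 * e)) := by
      have := mul_le_mul_of_nonneg_left sD hδ₀.le
      linarith [sA, sB]
    have hF := mul_le_mul_of_nonneg_right sE (mul_nonneg hM0.le he0)
    have hG := mul_le_mul_of_nonneg_right (mul_le_mul_of_nonneg_left h1' hM0.le) he0
    have hH : M * δ₀ * (t ^ (p - 2) * e ^ 2) = δ * m * (t ^ (p - 2) * e ^ 2) := by
      rw [hMδ]
    linarith [hF, hG, hH, hcterm]

/-- Modified monotonicity of the power flux function. -/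
theorem modified_monotonicity_power_flux (p : ℝ) (hp1 : 1 < p) (n : ℕ) (hn : 1 ≤ n)
    (δ : ℝ) (hδ : 0 < δ) :
    ∃ c : ℝ, 0 < c ∧
      ∀ x y z : EuclideanSpace ℝ (Fin n),
        (inner ℝ (sigmaFlux p x - sigmaFlux p z) (x - y) : ℝ) ≤
          δ * (inner ℝ (sigmaFlux p y - sigmaFlux p x) (y - x) : ℝ) +
            c * ((‖x‖ + ‖z‖) ^ (p - 2) * ‖x - z‖ ^ 2) := by
  obtain ⟨M, hM0, hL2⟩ := fluxLip hp1 n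
  obtain ⟨m, hm0, hL1⟩ := fluxMono hp1 n
  obtain ⟨c, hc0, hcore⟩ := mainCore hp1 hδ hM0 hm0
  refine ⟨c, hc0, ?_⟩
  intro x y z
  have f1 : (0:ℝ) ≤ ‖x - z‖ := norm_nonneg _
  have f2 : (0:ℝ) ≤ ‖x - y‖ := norm_nonneg _
  have f3 : ‖x - z‖ ≤ ‖x‖ + ‖z‖ := norm_sub_le x z
  have f4 : ‖x - y‖ ≤ ‖x‖ + ‖y‖ := norm_sub_le x y
  have f5 : ‖x‖ + ‖z‖ ≤ 2 * (‖x‖ + ‖y‖) + ‖x - z‖ := by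
    have h1 : ‖z‖ - ‖x‖ ≤ ‖z - x‖ := norm_sub_norm_le z x
    rw [norm_sub_rev z x] at h1
    linarith [norm_nonneg y, norm_nonneg x]
  have f6 : (‖x‖ + ‖y‖) - 2 * (‖x‖ + ‖z‖) ≤ ‖x - y‖ := by
    have h1 : ‖y‖ - ‖x‖ ≤ ‖y - x‖ := norm_sub_norm_le y x
    rw [norm_sub_rev y x] at h1
    linarith [norm_nonneg z]
  have hkey := hcore (‖x‖ + ‖z‖) (‖x‖ + ‖y‖) ‖x - z‖ ‖x - y‖ f1 f2 f3 f4 f5 f6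
  have hmono : m * ((‖x‖ + ‖y‖) ^ (p - 2) * ‖x - y‖ ^ 2) ≤
      (inner ℝ (sigmaFlux p y - sigmaFlux p x) (y - x) : ℝ) := by
    have h := hL1 y x
    rwa [add_comm ‖y‖ ‖x‖, norm_sub_rev y x] at h
  have hmono' := mul_le_mul_of_nonneg_left hmono hδ.le
  calc (inner ℝ (sigmaFlux p x - sigmaFlux p z) (x - y) : ℝ)
      ≤ ‖sigmaFlux p x - sigmaFlux p z‖ * ‖x - y‖ := real_inner_le_norm _ _
    _ ≤ (M * ((‖x‖ + ‖z‖) ^ (p - 2) * ‖x - z‖)) * ‖x - y‖ :=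
        mul_le_mul_of_nonneg_right (hL2 x z) (norm_nonneg _)
    _ = M * ((‖x‖ + ‖z‖) ^ (p - 2) * ‖x - z‖) * ‖x - y‖ := by ring
    _ ≤ δ * (m * ((‖x‖ + ‖y‖) ^ (p - 2) * ‖x - y‖ ^ 2)) +
        c * ((‖x‖ + ‖z‖) ^ (p - 2) * ‖x - z‖ ^ 2) := hkey
    _ ≤ δ * (inner ℝ (sigmaFlux p y - sigmaFlux p x) (y - x) : ℝ) +
        c * ((‖x‖ + ‖z‖) ^ (p - 2) * ‖x - z‖ ^ 2) := by linarith
end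

section
/- Let p ∈ (1, ∞), let n ≥ 1 be an integer, and let σ_n : ℝ^n → ℝ^n be given by σ_n(x) = |x|^{p−2} x (with σ_n(0) = 0). There exists a constant c > 0, depending only on p, such that for all x, y ∈ ℝ^n: (σ_n(y) − σ_n(x)) · (y − x) ≥ c (|x| + |y|)^{p−2} |x − y|^2, where the right-hand side is interpreted as 0 when x = y. -/
open Real

/-- `a^(p-2) * a = a^(p-1)` for `a ≥ 0`, `p > 1`. -/
private lemma rpow_p2_mul {p a : ℝ} (hp : 1 < p) (ha : 0 ≤ a) :
    a ^ (p - 2) * a = a ^ (p - 1) := by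
  rcases ha.eq_or_lt with h | h
  · rw [← h, Real.zero_rpow (by intro hh; linarith [sub_eq_zero.mp hh] : p - 1 ≠ 0), mul_zero]
  · rw [show p - 1 = (p - 2) + 1 by ring, Real.rpow_add_one h.ne']

/-- Concave tangent: for `0 < q ≤ 1`, `r ≥ 0`, `r^q ≤ 1 + q*(r-1)`. -/
private lemma tangent_conc {q r : ℝ} (hq0 : 0 < q) (hq1 : q ≤ 1) (hr : 0 ≤ r) :
    r ^ q ≤ 1 + q * (r - 1) := by
  have h := rpow_one_add_le_one_add_mul_self (by linarith : (-1:ℝ) ≤ r - 1) hq0.le hq1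
  rwa [show (1:ℝ) + (r - 1) = r by ring] at h

/-- Convex tangent at `m`: for `q ≥ 1`, `0 < m ≤ 1`, `m^q + q*(m^(q-1)*(1-m)) ≤ 1`. -/
private lemma tangent_conv {q m : ℝ} (hq : 1 ≤ q) (hm : 0 < m) (hm1 : m ≤ 1) :
    m ^ q + q * (m ^ (q - 1) * (1 - m)) ≤ 1 := by
  have hs : (0:ℝ) ≤ (1 - m) / m := by
    apply div_nonneg (by linarith) hm.le
  have hber := one_add_mul_self_le_rpow_one_add (by linarith : (-1:ℝ) ≤ (1 - m) / m) hq
  have h1 : (1:ℝ) + (1 - m) / m = 1 / m := by field_simp; ring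
  rw [h1, div_rpow zero_le_one hm.le, one_rpow] at hber
  have hmq : 0 < m ^ q := rpow_pos_of_pos hm q
  have h3 := mul_le_mul_of_nonneg_right hber hmq.le
  rw [one_div, inv_mul_cancel₀ hmq.ne'] at h3
  have hmm : m ^ (q - 1) * m = m ^ q := by
    rw [← Real.rpow_add_one hm.ne' (q - 1), sub_add_cancel]
  have hexp : (1 + q * ((1 - m) / m)) * m ^ q = m ^ q + q * (m ^ (q - 1) * (1 - m)) := by
    field_simp
    linear_combination (-(q*(1-m))) * hmm
  linarith [hexp ▸ h3]

/-- Endpoint 1, assuming `b ≤ a`. -/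
private lemma e1aux {p : ℝ} (hp : 1 < p) {a b : ℝ} (hb : 0 ≤ b) (hba : b ≤ a) :
    2 ^ (1 - p) * min (p - 1) 1 * ((a + b) ^ (p - 2) * (a - b) ^ 2)
      ≤ (a ^ (p - 1) - b ^ (p - 1)) * (a - b) := by
  rcases hba.eq_or_lt with h | h
  · rw [← h]; simp
  have ha : 0 < a := hb.trans_lt h
  set c0 : ℝ := 2 ^ (1 - p) * min (p - 1) 1 with hc0def
  have he0 : (0:ℝ) < 2 ^ (1 - p) := rpow_pos_of_pos two_pos _
  have hmin0 : 0 < min (p - 1) 1 := lt_min (by linarith) one_pos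
  have hc0pos : 0 < c0 := mul_pos he0 hmin0
  -- substitution r = b/a
  set r : ℝ := b / a with hrdef
  have hbr : b = a * r := by rw [hrdef]; field_simp
  have hr0 : 0 ≤ r := div_nonneg hb ha.le
  have hr1 : r < 1 := (div_lt_one ha).2 h
  have haq : a ^ (p - 2) * a = a ^ (p - 1) := rpow_p2_mul hp ha.le
  set X := a ^ (p - 2) with hX
  set Y := a ^ (p - 1) with hYdef
  have hY : 0 ≤ Y := rpow_nonneg ha.le _
  set u := (1 + r) ^ (p - 2) with hu
  set w := r ^ (p - 1) with hw
  have hu0 : 0 ≤ u := rpow_nonneg (by linarith) _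
  have hbq : b ^ (p - 1) = Y * w := by
    rw [hbr, Real.mul_rpow ha.le hr0]
  have hab2 : (a + b) ^ (p - 2) = X * u := by
    rw [show a + b = a * (1 + r) by rw [hbr]; ring, Real.mul_rpow ha.le (by linarith)]
  rw [hbq, hab2, hbr]
  -- goal: c0 * (X*u * (a - a*r)^2) ≤ (Y - Y*w) * (a - a*r)
  -- key inequality: c0 * (u * (1 - r)) ≤ 1 - w
  have hkey : c0 * (u * (1 - r)) ≤ 1 - w := by
    rcases le_total p 2 with h2 | h2
    · -- p ≤ 2 : concave case
      have huu : u ≤ 1 := by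
        calc u ≤ (1:ℝ) ^ (p - 2) :=
              rpow_le_rpow_of_nonpos one_pos (by linarith) (by linarith)
          _ = 1 := one_rpow _
      have hww : w ≤ 1 + (p - 1) * (r - 1) := tangent_conc (by linarith) (by linarith) hr0
      have hc : c0 ≤ p - 1 := by
        have h21 : (2:ℝ) ^ (1 - p) ≤ 1 :=
          rpow_le_one_of_one_le_of_nonpos one_le_two (by linarith)
        calc c0 ≤ 1 * (p - 1) :=
              mul_le_mul h21 (min_le_left _ _) hmin0.le zero_le_one
          _ = p - 1 := one_mul _
      have h5 : c0 * u ≤ p - 1 := le_trans (mul_le_of_le_one_right hc0pos.le huu) hc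
      nlinarith [mul_le_mul_of_nonneg_right h5 (by linarith : (0:ℝ) ≤ 1 - r)]
    · -- p ≥ 2 : convex case
      set m : ℝ := (1 + r) / 2 with hmdef
      have hm0 : 0 < m := by rw [hmdef]; linarith
      have hm1 : m ≤ 1 := by rw [hmdef]; linarith
      have hrm : r ≤ m := by rw [hmdef]; linarith
      have htan := tangent_conv (by linarith : 1 ≤ p - 1) hm0 hm1
      rw [show p - 1 - 1 = p - 2 by ring] at htan
      have hrq : w ≤ m ^ (p - 1) := rpow_le_rpow hr0 hrm (by linarith)
      -- m^(p-2) = u * 2^(1-p) * 2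
      have h2ne : ((2:ℝ) ^ (p - 2)) ≠ 0 := (rpow_pos_of_pos two_pos _).ne'
      have hprod : (2:ℝ) ^ (1 - p) * 2 * (2:ℝ) ^ (p - 2) = 1 := by
        rw [mul_comm ((2:ℝ) ^ (1 - p)) 2, mul_assoc, ← Real.rpow_add two_pos,
          show (1 - p) + (p - 2) = (-1:ℝ) by ring, Real.rpow_neg_one]
        norm_num
      have hmp : m ^ (p - 2) = u * ((2:ℝ) ^ (1 - p) * 2) := by
        rw [hmdef, div_rpow (by linarith) (by norm_num), ← hu]
        field_simp
        linear_combination (-u) * hprod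
      have h1m : 1 - m = (1 - r) / 2 := by rw [hmdef]; ring
      have hineq : (p - 1) * ((2:ℝ) ^ (1 - p) * (u * (1 - r))) ≤ 1 - w := by
        have : (p - 1) * (m ^ (p - 2) * (1 - m)) ≤ 1 - w := by linarith
        rw [hmp, h1m] at this
        linarith [this]
      have hc2 : c0 ≤ (p - 1) * 2 ^ (1 - p) := by
        have : min (p - 1) 1 ≤ p - 1 := min_le_left _ _
        calc c0 = min (p - 1) 1 * 2 ^ (1 - p) := by rw [hc0def]; ring
          _ ≤ (p - 1) * 2 ^ (1 - p) := mul_le_mul_of_nonneg_right this he0.le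
      have hur : 0 ≤ u * (1 - r) := mul_nonneg hu0 (by linarith)
      have := mul_le_mul_of_nonneg_right hc2 hur
      nlinarith [hineq]
  -- assemble
  have hfin := mul_le_mul_of_nonneg_right hkey hY
  have har : 0 ≤ a * (1 - r) := (mul_pos ha (by linarith : (0:ℝ) < 1 - r)).le
  calc 2 ^ (1 - p) * min (p - 1) 1 * (X * u * (a - a * r) ^ 2)
      = (c0 * (u * (1 - r)) * Y) * (a * (1 - r)) := by rw [← haq]; ring
    _ ≤ ((1 - w) * Y) * (a * (1 - r)) := mul_le_mul_of_nonneg_right hfin har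
    _ = (Y - Y * w) * (a - a * r) := by ring

/-- Endpoint 1, symmetric version. -/
private lemma e1full {p : ℝ} (hp : 1 < p) {a b : ℝ} (ha : 0 ≤ a) (hb : 0 ≤ b) :
    2 ^ (1 - p) * min (p - 1) 1 * ((a + b) ^ (p - 2) * (a - b) ^ 2)
      ≤ (a ^ (p - 1) - b ^ (p - 1)) * (a - b) := by
  rcases le_total b a with h | h
  · exact e1aux hp hb h
  · have := e1aux hp ha h
    rw [add_comm b a] at this
    nlinarith [this]

/-- Endpoint 2. -/
private lemma e2full {p : ℝ} (hp : 1 < p) {a b : ℝ} (ha : 0 ≤ a) (hb : 0 ≤ b) :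
    2 ^ (1 - p) * min (p - 1) 1 * ((a + b) ^ (p - 2) * (a + b) ^ 2)
      ≤ (a ^ (p - 1) + b ^ (p - 1)) * (a + b) := by
  -- wlog b ≤ a
  wlog hba : b ≤ a generalizing a b
  · have := this hb ha (le_of_not_ge hba)
    rw [add_comm b a] at this
    linarith
  rcases ha.eq_or_lt with h0 | h0
  · have hb0 : b = 0 := le_antisymm (by linarith) hb
    rw [← h0, hb0]
    norm_num
  have hs : 0 < a + b := by linarith
  have hq : (a + b) ^ (p - 2) * (a + b) = (a + b) ^ (p - 1) := rpow_p2_mul hp hs.le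
  -- key: c0 * (a+b)^(p-1) ≤ a^(p-1) + b^(p-1)
  have he0 : (0:ℝ) < 2 ^ (1 - p) := rpow_pos_of_pos two_pos _
  have hmin0 : 0 < min (p - 1) 1 := lt_min (by linarith) one_pos
  have h2p : (2:ℝ) ^ (1 - p) = ((2:ℝ) ^ (p - 1))⁻¹ := by
    rw [show (1 - p) = -(p - 1) by ring, Real.rpow_neg (by norm_num)]
  have hhalf : ((a + b) / 2) ^ (p - 1) ≤ a ^ (p - 1) :=
    rpow_le_rpow (by positivity) (by linarith) (by linarith)
  have hdiv : ((a + b) / 2) ^ (p - 1) = (a + b) ^ (p - 1) * (2:ℝ) ^ (1 - p) := by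
    rw [div_rpow hs.le (by norm_num), h2p, div_eq_mul_inv]
  have hbq : 0 ≤ b ^ (p - 1) := rpow_nonneg hb _
  have hkey : 2 ^ (1 - p) * min (p - 1) 1 * (a + b) ^ (p - 1)
      ≤ a ^ (p - 1) + b ^ (p - 1) := by
    have hsq : 0 ≤ (a + b) ^ (p - 1) := rpow_nonneg hs.le _
    have hm1 : min (p - 1) 1 ≤ 1 := min_le_right _ _
    nlinarith [hdiv ▸ hhalf, mul_le_mul_of_nonneg_right
      (mul_le_mul_of_nonneg_left hm1 he0.le) hsq]
  calc 2 ^ (1 - p) * min (p - 1) 1 * ((a + b) ^ (p - 2) * (a + b) ^ 2)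
      = 2 ^ (1 - p) * min (p - 1) 1 * (a + b) ^ (p - 1) * (a + b) := by
        rw [pow_two, ← mul_assoc ((a + b) ^ (p - 2)) (a + b), hq]; ring
    _ ≤ (a ^ (p - 1) + b ^ (p - 1)) * (a + b) :=
        mul_le_mul_of_nonneg_right hkey hs.le

/-- The scalar version of the main inequality. -/
private lemma main_real {p : ℝ} (hp : 1 < p) {a b t : ℝ} (ha : 0 ≤ a) (hb : 0 ≤ b)
    (ht : |t| ≤ a * b) :
    2 ^ (1 - p) * min (p - 1) 1 * ((a + b) ^ (p - 2) * (a ^ 2 - 2 * t + b ^ 2))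
      ≤ b ^ (p - 2) * b ^ 2 + a ^ (p - 2) * a ^ 2 - (a ^ (p - 2) + b ^ (p - 2)) * t := by
  obtain ⟨htl, htr⟩ := abs_le.mp ht
  set c0 : ℝ := 2 ^ (1 - p) * min (p - 1) 1 with hc0def
  set A := a ^ (p - 2) with hA
  set B := b ^ (p - 2) with hB
  set S := (a + b) ^ (p - 2) with hS
  have hu : A * a = a ^ (p - 1) := rpow_p2_mul hp ha
  have hv : B * b = b ^ (p - 1) := rpow_p2_mul hp hb
  have hua2 : A * a ^ 2 = a ^ (p - 1) * a := by rw [pow_two, ← mul_assoc, hu]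
  have hvb2 : B * b ^ 2 = b ^ (p - 1) * b := by rw [pow_two, ← mul_assoc, hv]
  have huab : A * (a * b) = a ^ (p - 1) * b := by rw [← mul_assoc, hu]
  have hvab : B * (a * b) = b ^ (p - 1) * a := by rw [mul_comm a b, ← mul_assoc, hv]
  have he1 := e1full hp ha hb
  have he2 := e2full hp ha hb
  rw [← hc0def, ← hS] at he1 he2
  rcases le_total (2 * c0 * S) (A + B) with h | h
  · -- slope nonpositive: use t ≤ a*b
    have h1 : 0 ≤ (A + B - 2 * c0 * S) * (a * b - t) :=
      mul_nonneg (by linarith) (by linarith)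
    nlinarith [h1, he1, hua2, hvb2, huab, hvab]
  · -- slope nonnegative: use -a*b ≤ t
    have h1 : 0 ≤ (2 * c0 * S - (A + B)) * (t + a * b) :=
      mul_nonneg (by linarith) (by linarith)
    nlinarith [h1, he2, hua2, hvb2, huab, hvab]

/-- Lower equivalence: `(σₙ(y) - σₙ(x)) · (y - x) ≥ c (|x|+|y|)^{p-2} |x-y|²`. -/
theorem power_flux_lower_equivalence (p : ℝ) (hp1 : 1 < p) (n : ℕ) (hn : 1 ≤ n) :
    ∃ c : ℝ, 0 < c ∧
      ∀ x y : EuclideanSpace ℝ (Fin n),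
        c * ((‖x‖ + ‖y‖) ^ (p - 2) * ‖x - y‖ ^ 2) ≤
          (inner ℝ (sigmaFlux p y - sigmaFlux p x) (y - x) : ℝ) := by
  refine ⟨2 ^ (1 - p) * min (p - 1) 1,
    mul_pos (rpow_pos_of_pos two_pos _) (lt_min (by linarith) one_pos), fun x y => ?_⟩
  have hinner : (inner ℝ (sigmaFlux p y - sigmaFlux p x) (y - x) : ℝ)
      = ‖y‖ ^ (p - 2) * ‖y‖ ^ 2 + ‖x‖ ^ (p - 2) * ‖x‖ ^ 2
        - (‖x‖ ^ (p - 2) + ‖y‖ ^ (p - 2)) * (inner ℝ x y : ℝ) := by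
    simp only [sigmaFlux, inner_sub_left, inner_sub_right, real_inner_smul_left,
      real_inner_smul_right, real_inner_self_eq_norm_sq, real_inner_comm x y]
    ring
  rw [hinner, norm_sub_sq_real]
  have := main_real hp1 (norm_nonneg x) (norm_nonneg y) (abs_real_inner_le_norm x y)
  linarith [this]
end

section
/- Let p ∈ (1, ∞), let n ≥ 1 be an integer, and let σ_n : ℝ^n → ℝ^n be given by σ_n(x) = |x|^{p−2} x (with σ_n(0) = 0). There exists a constant C > 0, depending only on p, such that for all x, y ∈ ℝ^n: (σ_n(y) − σ_n(x)) · (y − x) ≤ C (|x| + |y|)^{p−2} |x − y|^2, where the right-hand side is interpreted as 0 when x = y. -/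
open Real

-- identity: a^(p-2) * a = a^(p-1) for 0 ≤ a, p ≠ 1, p ≠ 2 handled
lemma rpow_mul_self {a q : ℝ} (ha : 0 ≤ a) (hq : q + 1 ≠ 0) : a ^ q * a = a ^ (q+1) := by
  rcases eq_or_lt_of_le ha with rfl | ha'
  · simp [Real.zero_rpow hq]
  · rw [Real.rpow_add ha', Real.rpow_one]

lemma key1 {p a b : ℝ} (hp1 : 1 < p) (hb : 0 ≤ b) (hba : b ≤ a) :
    a ^ (p-1) - b ^ (p-1) ≤ (p+2) * ((a+b) ^ (p-2) * (a-b)) := by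
  have ha : 0 ≤ a := hb.trans hba
  rcases eq_or_lt_of_le hb with rfl | hb'
  · -- b = 0
    simp only [add_zero, sub_zero]
    have h0 : (0:ℝ) ^ (p-1) = 0 := Real.zero_rpow (by intro h; nlinarith [h])
    rw [h0, sub_zero]
    have : a ^ (p-2) * a = a ^ (p-1) := by
      have := rpow_mul_self (q := p-2) ha (by intro h; nlinarith [h])
      simpa [show p-2+1 = p-1 by ring] using this
    rw [this]
    nlinarith [Real.rpow_nonneg ha (p-1)]
  · have ha' : 0 < a := lt_of_lt_of_le hb' hba
    rcases le_total 2 p with hp2 | hp2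
    · -- p ≥ 2, Bernoulli
      have hs : -1 ≤ b/a - 1 := by
        have : 0 ≤ b/a := by positivity
        linarith
      have hb1 : 1 + (p-1) * (b/a - 1) ≤ (1 + (b/a - 1)) ^ (p-1) :=
        one_add_mul_self_le_rpow_one_add hs (by linarith)
      have h1 : 1 + (b/a-1) = b/a := by ring
      rw [h1] at hb1
      -- (b/a)^(p-1) = b^(p-1)/a^(p-1)
      have h2 : (b/a) ^ (p-1) = b ^ (p-1) / a ^ (p-1) := Real.div_rpow hb ha (p-1)
      rw [h2] at hb1
      have hA : 0 < a ^ (p-1) := Real.rpow_pos_of_pos ha' _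
      -- multiply by a^(p-1)
      have h3 : a ^ (p-1) + (p-1) * (b/a - 1) * a ^ (p-1) ≤ b ^ (p-1) := by
        have := mul_le_mul_of_nonneg_right hb1 hA.le
        calc a ^ (p-1) + (p-1)*(b/a-1)*a^(p-1) = (1 + (p-1)*(b/a-1)) * a^(p-1) := by ring
        _ ≤ (b^(p-1)/a^(p-1)) * a^(p-1) := this
        _ = b^(p-1) := by field_simp
      -- (b/a - 1)*a^(p-1) = (b-a)*a^(p-2)
      have h4 : (b/a - 1) * a ^ (p-1) = (b-a) * a ^ (p-2) := by
        have : a ^ (p-1) = a ^ (p-2) * a := by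
          have := rpow_mul_self (q := p-2) ha (by intro h; nlinarith [h])
          rw [this, show p-2+1 = p-1 by ring]
        rw [this]
        field_simp
      have h5 : a ^ (p-1) - b ^ (p-1) ≤ (p-1) * (a ^ (p-2) * (a-b)) := by nlinarith [h3, h4]
      have h6 : a ^ (p-2) ≤ (a+b) ^ (p-2) := Real.rpow_le_rpow ha (by linarith) (by linarith)
      have hs0 : 0 ≤ (a+b) ^ (p-2) := Real.rpow_nonneg (by linarith) _
      nlinarith [h5, mul_le_mul_of_nonneg_right h6 (sub_nonneg.2 hba),
        mul_nonneg hs0 (sub_nonneg.2 hba)]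
    · -- p ≤ 2
      -- a^(p-1) - b^(p-1) ≤ a^(p-2)*(a-b)
      have h1 : a ^ (p-2) ≤ b ^ (p-2) := Real.rpow_le_rpow_of_nonpos hb' hba (by linarith)
      have hA : a ^ (p-2) * a = a ^ (p-1) := by
        have := rpow_mul_self (q := p-2) ha (by intro h; nlinarith [h])
        simpa [show p-2+1 = p-1 by ring] using this
      have hB : b ^ (p-2) * b = b ^ (p-1) := by
        have := rpow_mul_self (q := p-2) hb (by intro h; nlinarith [h])
        simpa [show p-2+1 = p-1 by ring] using this
      have h2 : a ^ (p-1) - b ^ (p-1) ≤ a ^ (p-2) * (a-b) := by nlinarith [h1, hA, hB, hb'.le]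
      -- a^(p-2) ≤ 2*(a+b)^(p-2): (a+b)^(p-2) ≥ (2a)^(p-2) = 2^(p-2) a^(p-2) ≥ a^(p-2)/2
      have h3 : (2*a) ^ (p-2) ≤ (a+b) ^ (p-2) := Real.rpow_le_rpow_of_nonpos (show (0:ℝ) < a+b by linarith) (by linarith) (by linarith)
      have h4 : (2*a) ^ (p-2) = 2 ^ (p-2) * a ^ (p-2) := Real.mul_rpow (by norm_num) ha
      have h5 : (2:ℝ)⁻¹ ≤ 2 ^ (p-2) := by
        have : (2:ℝ)^(-1:ℝ) ≤ 2 ^ (p-2) := Real.rpow_le_rpow_of_exponent_le (by norm_num) (by linarith)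
        simpa [Real.rpow_neg_one] using this
      have hap : 0 ≤ a ^ (p-2) := Real.rpow_nonneg ha _
      have h6 : a ^ (p-2) ≤ 2 * (a+b) ^ (p-2) := by nlinarith [h3, h4, h5, hap]
      have hs0 : 0 ≤ (a+b) ^ (p-2) := Real.rpow_nonneg (by linarith) _
      nlinarith [h2, mul_le_mul_of_nonneg_right h6 (sub_nonneg.2 hba),
        mul_nonneg hs0 (sub_nonneg.2 hba)]

lemma key2 {p a b : ℝ} (hp1 : 1 < p) (ha : 0 ≤ a) (hb : 0 ≤ b) :
    a ^ (p-1) + b ^ (p-1) ≤ (p+2) * (a+b) ^ (p-1) := by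
  have h1 : a ^ (p-1) ≤ (a+b) ^ (p-1) := Real.rpow_le_rpow ha (by linarith) (by linarith)
  have h2 : b ^ (p-1) ≤ (a+b) ^ (p-1) := Real.rpow_le_rpow hb (by linarith) (by linarith)
  nlinarith [Real.rpow_nonneg (show (0:ℝ) ≤ a+b by linarith) (p-1)]

lemma scalar_main {p a b t : ℝ} (hp1 : 1 < p) (hb : 0 ≤ b) (hba : b ≤ a)
    (ht1 : -(a*b) ≤ t) (ht2 : t ≤ a*b) :
    a ^ p + b ^ p - (a ^ (p-2) + b ^ (p-2)) * t ≤
      (p+2) * ((a+b) ^ (p-2) * (a^2 + b^2 - 2*t)) := by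
  have ha : 0 ≤ a := hb.trans hba
  have hA1 : a ^ (p-2) * a = a ^ (p-1) := by
    have := rpow_mul_self (q := p-2) ha (by intro h; nlinarith [h])
    rwa [show p-2+1 = p-1 by ring] at this
  have hB1 : b ^ (p-2) * b = b ^ (p-1) := by
    have := rpow_mul_self (q := p-2) hb (by intro h; nlinarith [h])
    rwa [show p-2+1 = p-1 by ring] at this
  have hA2 : a ^ (p-1) * a = a ^ p := by
    have := rpow_mul_self (q := p-1) ha (by intro h; nlinarith [h])
    rwa [show p-1+1 = p by ring] at this
  have hB2 : b ^ (p-1) * b = b ^ p := by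
    have := rpow_mul_self (q := p-1) hb (by intro h; nlinarith [h])
    rwa [show p-1+1 = p by ring] at this
  have hS1 : (a+b) ^ (p-2) * (a+b) = (a+b) ^ (p-1) := by
    have := rpow_mul_self (q := p-2) (show (0:ℝ) ≤ a+b by linarith) (by intro h; nlinarith [h])
    rwa [show p-2+1 = p-1 by ring] at this
  have hAb : a ^ (p-1) * b = a ^ (p-2) * (a*b) := by rw [← hA1]; ring
  have hBa : b ^ (p-1) * a = b ^ (p-2) * (a*b) := by rw [← hB1]; ring
  have e1 := mul_le_mul_of_nonneg_right (key1 hp1 hb hba) (sub_nonneg.2 hba)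
  have e2 := mul_le_mul_of_nonneg_right (key2 hp1 ha hb) (show (0:ℝ) ≤ a+b by linarith)
  rcases le_total (a ^ (p-2) + b ^ (p-2)) (2*(p+2)*(a+b) ^ (p-2)) with h | h
  · nlinarith [e1, hA2, hB2, hAb, hBa, mul_le_mul_of_nonneg_right h (sub_nonneg.2 ht2)]
  · have hS2 : (a+b) ^ (p-1) * (a+b) = (a+b) ^ (p-2) * ((a+b)*(a+b)) := by rw [← hS1]; ring
    nlinarith [e2, hA2, hB2, hAb, hBa, hS2,
      mul_le_mul_of_nonneg_right h (show (0:ℝ) ≤ t + a*b by linarith)]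

lemma rpow_sub_two_mul_sq {p a : ℝ} (hp1 : 1 < p) (ha : 0 ≤ a) : a ^ (p-2) * a^2 = a ^ p := by
  have h1 : a ^ (p-2) * a = a ^ (p-1) := by
    have := rpow_mul_self (q := p-2) ha (by intro h; nlinarith [h])
    rwa [show p-2+1 = p-1 by ring] at this
  have h2 : a ^ (p-1) * a = a ^ p := by
    have := rpow_mul_self (q := p-1) ha (by intro h; nlinarith [h])
    rwa [show p-1+1 = p by ring] at this
  calc a ^ (p-2) * a^2 = a ^ (p-2) * a * a := by ring
  _ = a ^ p := by rw [h1, h2]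

/-- Upper equivalence: `(σₙ(y) - σₙ(x)) · (y - x) ≤ C (|x|+|y|)^{p-2} |x-y|²`. -/
theorem power_flux_upper_equivalence (p : ℝ) (hp1 : 1 < p) (n : ℕ) (hn : 1 ≤ n) :
    ∃ C : ℝ, 0 < C ∧
      ∀ x y : EuclideanSpace ℝ (Fin n),
        (inner ℝ (sigmaFlux p y - sigmaFlux p x) (y - x) : ℝ) ≤
          C * ((‖x‖ + ‖y‖) ^ (p - 2) * ‖x - y‖ ^ 2) := by
  refine ⟨p + 2, by linarith, fun x y => ?_⟩
  have hinner : (inner ℝ (sigmaFlux p y - sigmaFlux p x) (y - x) : ℝ) =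
      ‖x‖ ^ (p-2) * ‖x‖^2 + ‖y‖ ^ (p-2) * ‖y‖^2 -
        (‖x‖ ^ (p-2) + ‖y‖ ^ (p-2)) * (inner ℝ x y : ℝ) := by
    simp only [sigmaFlux, inner_sub_left, inner_sub_right, real_inner_smul_left,
      real_inner_self_eq_norm_sq, real_inner_comm y x]
    ring
  have hns : ‖x - y‖^2 = ‖x‖^2 - 2 * (inner ℝ x y : ℝ) + ‖y‖^2 := norm_sub_sq_real x y
  have hcs := abs_real_inner_le_norm x y
  rw [abs_le] at hcs
  have hx2 := rpow_sub_two_mul_sq hp1 (norm_nonneg x)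
  have hy2 := rpow_sub_two_mul_sq hp1 (norm_nonneg y)
  rw [hinner, hns]
  rcases le_total ‖y‖ ‖x‖ with h | h
  · have := scalar_main (t := (inner ℝ x y : ℝ)) hp1 (norm_nonneg y) h
      (by linarith [hcs.1]) hcs.2
    nlinarith [this, hx2, hy2]
  · have := scalar_main (t := (inner ℝ x y : ℝ)) hp1 (norm_nonneg x) h
      (by nlinarith [hcs.1]) (by nlinarith [hcs.2])
    rw [add_comm ‖x‖ ‖y‖]
    nlinarith [this, hx2, hy2]
end

section
/- Let p ∈ (1, ∞), let n ≥ 1 be an integer, let σ_n : ℝ^n → ℝ^n be given by σ_n(x) = |x|^{p−2} x (with σ_n(0) = 0), and for a ≥ 0 let φ_a(t) = ∫_0^t (a + s)^{p−2} s ds. There exist constants c, C > 0, depending only on p, such that for all x, y ∈ ℝ^n: c φ_{|x|}(|x − y|) ≤ (σ_n(y) − σ_n(x)) · (y − x) ≤ C φ_{|x|}(|x − y|). -/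
/-- The shifted N-function `φ_a(t) = ∫₀ᵗ (a + s)^{p-2} s ds`. -/
noncomputable def phiShift (p a t : ℝ) : ℝ :=
  ∫ s in (0:ℝ)..t, (a + s) ^ (p - 2) * s

open Real
set_option maxHeartbeats 1000000

lemma tangent_convex {q u v : ℝ} (hq : 1 ≤ q) (hu : 0 < u) (hv : 0 ≤ v) :
    q * u ^ (q - 1) * (v - u) ≤ v ^ q - u ^ q := by
  have hs : -1 ≤ v / u - 1 := by
    have : 0 ≤ v / u := div_nonneg hv hu.le
    linarith
  have hB := one_add_mul_self_le_rpow_one_add hs hq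
  have h1 : (1 + (v / u - 1)) = v / u := by ring
  rw [h1, div_rpow hv hu.le] at hB
  have hupos : (0:ℝ) < u ^ q := rpow_pos_of_pos hu q
  have h2 : u ^ q * (1 + q * (v / u - 1)) ≤ u ^ q * (v ^ q / u ^ q) :=
    mul_le_mul_of_nonneg_left hB hupos.le
  rw [mul_div_cancel₀ _ hupos.ne'] at h2
  have h3 : u ^ q * (1 + q * (v / u - 1)) = u ^ q + q * (u ^ q / u) * (v - u) := by
    field_simp
  rw [h3] at h2
  have h4 : u ^ q / u = u ^ (q - 1) := by
    rw [eq_comm, rpow_sub hu, rpow_one]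
  rw [h4] at h2
  linarith

lemma tangent_concave {q u v : ℝ} (hq0 : 0 ≤ q) (hq : q ≤ 1) (hu : 0 < u) (hv : 0 ≤ v) :
    v ^ q - u ^ q ≤ q * u ^ (q - 1) * (v - u) := by
  have hs : -1 ≤ v / u - 1 := by
    have : 0 ≤ v / u := div_nonneg hv hu.le
    linarith
  have hB := rpow_one_add_le_one_add_mul_self hs hq0 hq
  have h1 : (1 + (v / u - 1)) = v / u := by ring
  rw [h1, div_rpow hv hu.le] at hB
  have hupos : (0:ℝ) < u ^ q := rpow_pos_of_pos hu q
  have h2 : u ^ q * (v ^ q / u ^ q) ≤ u ^ q * (1 + q * (v / u - 1)) :=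
    mul_le_mul_of_nonneg_left hB hupos.le
  rw [mul_div_cancel₀ _ hupos.ne'] at h2
  have h3 : u ^ q * (1 + q * (v / u - 1)) = u ^ q + q * (u ^ q / u) * (v - u) := by
    field_simp
  have h4 : u ^ q / u = u ^ (q - 1) := by
    rw [eq_comm, rpow_sub hu, rpow_one]
  rw [h3, h4] at h2
  linarith

lemma rpow_mul_self_aux {a : ℝ} (ha : 0 ≤ a) {r : ℝ} (hr : r + 1 ≠ 0) :
    a ^ r * a = a ^ (r + 1) := by
  rcases eq_or_lt_of_le ha with rfl | ha'
  · simp [zero_rpow hr]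
  · rw [rpow_add_one ha'.ne']

/-- scalar core inequality -/
lemma scalar_core (p : ℝ) (hp1 : 1 < p) :
    ∃ c C : ℝ, 0 < c ∧ 0 < C ∧ ∀ a b : ℝ, 0 ≤ a → a ≤ b →
      c * ((a + b) ^ (p - 2) * (b - a)) ≤ b ^ (p - 1) - a ^ (p - 1) ∧
      b ^ (p - 1) - a ^ (p - 1) ≤ C * ((a + b) ^ (p - 2) * (b - a)) := by
  have hq0 : (0:ℝ) < p - 1 := by linarith
  have hE : p - 1 - 1 = p - 2 := by ring
  rcases le_or_gt 2 p with hp2 | hp2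
  · -- convex case, q = p-1 ≥ 1
    have hq : (1:ℝ) ≤ p - 1 := by linarith
    have hpm2 : (0:ℝ) ≤ p - 2 := by linarith
    refine ⟨min ((p-1) / 4 ^ (p-2)) ((1 - (1/3:ℝ) ^ (p-1)) / 2 ^ (p-2)), p - 1, ?_, by linarith, ?_⟩
    · apply lt_min
      · exact div_pos (by linarith) (rpow_pos_of_pos (by norm_num) _)
      · apply div_pos _ (rpow_pos_of_pos (by norm_num) _)
        have : (1/3:ℝ) ^ (p-1) < 1 ^ (p-1) := by
          apply rpow_lt_rpow (by norm_num) (by norm_num) hq0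
        simp only [one_rpow] at this
        linarith
    intro a b ha hab
    rcases eq_or_lt_of_le (ha.trans hab) with rfl | hb
    · have ha0 : a = 0 := le_antisymm hab ha
      subst ha0
      norm_num
    constructor
    · -- lower bound
      rcases le_or_gt b (3 * a) with h3 | h3
      · have ha' : 0 < a := by linarith
        have ht := tangent_convex hq ha' (ha.trans hab)
        rw [hE] at ht
        have hmono : ((a + b)/4) ^ (p-2) ≤ a ^ (p-2) :=
          rpow_le_rpow (by linarith) (by linarith) hpm2
        rw [div_rpow (by linarith) (by norm_num)] at hmono
        have h4 : (0:ℝ) < (4:ℝ) ^ (p-2) := rpow_pos_of_pos (by norm_num) _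
        have hle : min ((p-1) / 4 ^ (p-2)) ((1 - (1/3:ℝ) ^ (p-1)) / 2 ^ (p-2)) ≤ (p-1) / 4 ^ (p-2) :=
          min_le_left _ _
        have hab2 : (0:ℝ) ≤ (a+b) ^ (p-2) * (b - a) :=
          mul_nonneg (rpow_nonneg (by linarith) _) (by linarith)
        calc min ((p-1) / 4 ^ (p-2)) ((1 - (1/3:ℝ) ^ (p-1)) / 2 ^ (p-2)) * ((a+b)^(p-2)*(b-a))
            ≤ (p-1) / 4 ^ (p-2) * ((a+b)^(p-2)*(b-a)) := mul_le_mul_of_nonneg_right hle hab2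
          _ = (p-1) * ((a+b)^(p-2) / 4^(p-2)) * (b-a) := by ring
          _ ≤ (p-1) * a^(p-2) * (b-a) := by
              apply mul_le_mul_of_nonneg_right _ (by linarith)
              exact mul_le_mul_of_nonneg_left hmono (by linarith)
          _ ≤ b ^ (p-1) - a ^ (p-1) := ht
      · -- b > 3a
        have h13 : a ^ (p-1) ≤ (1/3:ℝ)^(p-1) * b^(p-1) := by
          rw [← mul_rpow (by norm_num) hb.le]
          exact rpow_le_rpow ha (by linarith) hq0.le
        have h2b : (a + b) ^ (p-2) ≤ 2^(p-2) * b^(p-2) := by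
          rw [← mul_rpow (by norm_num) hb.le]
          exact rpow_le_rpow (by linarith) (by linarith) hpm2
        have hbb : b ^ (p-2) * b = b ^ (p-1) := by
          have := rpow_mul_self_aux (a := b) (ha.trans hab) (r := p-2) (by intro h; linarith [hq0, h] )
          rw [this, show p - 2 + 1 = p - 1 by ring]
        have h2pos : (0:ℝ) < (2:ℝ)^(p-2) := rpow_pos_of_pos (by norm_num) _
        have key : (1 - (1/3:ℝ)^(p-1)) / 2^(p-2) * ((a+b)^(p-2)*(b-a)) ≤ b^(p-1) - a^(p-1) := by
          have hc1 : (0:ℝ) < 1 - (1/3:ℝ)^(p-1) := by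
            have : (1/3:ℝ) ^ (p-1) < 1 ^ (p-1) := rpow_lt_rpow (by norm_num) (by norm_num) hq0
            simp only [one_rpow] at this; linarith
          have step : (a+b)^(p-2)*(b-a) ≤ 2^(p-2) * b^(p-1) := by
            calc (a+b)^(p-2)*(b-a) ≤ (2^(p-2) * b^(p-2)) * b := by
                  apply mul_le_mul h2b (by linarith) (by linarith)
                    (by positivity)
              _ = 2^(p-2) * (b^(p-2)*b) := by ring
              _ = 2^(p-2) * b^(p-1) := by rw [hbb]
          calc (1 - (1/3:ℝ)^(p-1)) / 2^(p-2) * ((a+b)^(p-2)*(b-a))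
              ≤ (1 - (1/3:ℝ)^(p-1)) / 2^(p-2) * (2^(p-2) * b^(p-1)) := by
                apply mul_le_mul_of_nonneg_left step (by positivity)
            _ = (1 - (1/3:ℝ)^(p-1)) * b^(p-1) := by field_simp
            _ = b^(p-1) - (1/3:ℝ)^(p-1) * b^(p-1) := by ring
            _ ≤ b^(p-1) - a^(p-1) := by linarith
        calc min ((p-1) / 4 ^ (p-2)) ((1 - (1/3:ℝ) ^ (p-1)) / 2 ^ (p-2)) * ((a+b)^(p-2)*(b-a))
            ≤ (1 - (1/3:ℝ)^(p-1)) / 2^(p-2) * ((a+b)^(p-2)*(b-a)) := by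
              apply mul_le_mul_of_nonneg_right (min_le_right _ _)
              exact mul_nonneg (rpow_nonneg (by linarith) _) (by linarith)
          _ ≤ b^(p-1) - a^(p-1) := key
    · -- upper bound: b^q - a^q ≤ q b^{q-1}(b-a) ≤ q (a+b)^{p-2} (b-a)
      have ht := tangent_convex hq hb ha
      rw [hE] at ht
      have hmono : b ^ (p-2) ≤ (a+b)^(p-2) := rpow_le_rpow hb.le (by linarith) hpm2
      have : (p-1) * b^(p-2) * (a - b) ≤ a^(p-1) - b^(p-1) := ht
      have h2 : b^(p-1) - a^(p-1) ≤ (p-1) * b^(p-2) * (b-a) := by linarith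
      calc b^(p-1) - a^(p-1) ≤ (p-1) * b^(p-2) * (b-a) := h2
        _ ≤ (p-1) * ((a+b)^(p-2) * (b-a)) := by
            have := mul_le_mul_of_nonneg_right hmono (sub_nonneg.mpr hab)
            nlinarith [this]
  · -- concave case, q = p-1 < 1
    have hq : p - 1 ≤ 1 := by linarith
    have hpm2 : p - 2 ≤ 0 := by linarith
    refine ⟨p - 1, max ((p-1) / 4 ^ (p-2)) (3 / 2 ^ (p-1)), by linarith, ?_, ?_⟩
    · exact lt_max_of_lt_right (div_pos (by norm_num) (rpow_pos_of_pos (by norm_num) _))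
    intro a b ha hab
    rcases eq_or_lt_of_le (ha.trans hab) with rfl | hb
    · have ha0 : a = 0 := le_antisymm hab ha
      subst ha0
      norm_num
    constructor
    · -- lower: q b^{q-1}(b-a) ≤ b^q - a^q ; (a+b)^{p-2} ≤ b^{p-2}
      have ht := tangent_concave hq0.le hq hb ha
      rw [hE] at ht
      have h2 : (p-1) * b^(p-2) * (b-a) ≤ b^(p-1) - a^(p-1) := by nlinarith [ht]
      have hmono : (a+b)^(p-2) ≤ b^(p-2) := rpow_le_rpow_of_nonpos hb (by linarith) hpm2
      calc (p-1) * ((a+b)^(p-2)*(b-a)) ≤ (p-1) * (b^(p-2)*(b-a)) := by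
            apply mul_le_mul_of_nonneg_left _ (by linarith)
            exact mul_le_mul_of_nonneg_right hmono (by linarith)
        _ = (p-1) * b^(p-2) * (b-a) := by ring
        _ ≤ b^(p-1) - a^(p-1) := h2
    · rcases le_or_gt b (3 * a) with h3 | h3
      · have ha' : 0 < a := by linarith
        have ht := tangent_concave hq0.le hq ha' (ha.trans hab)
        rw [hE] at ht
        have hmono : a ^ (p-2) ≤ ((a + b)/4) ^ (p-2) :=
          rpow_le_rpow_of_nonpos (by linarith) (by linarith) hpm2
        rw [div_rpow (by linarith) (by norm_num)] at hmono
        have h4 : (0:ℝ) < (4:ℝ) ^ (p-2) := rpow_pos_of_pos (by norm_num) _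
        have hmax : (p-1) / 4 ^ (p-2) ≤ max ((p-1) / 4 ^ (p-2)) (3 / 2 ^ (p-1)) := le_max_left _ _
        calc b^(p-1) - a^(p-1) ≤ (p-1) * a^(p-2) * (b-a) := ht
          _ ≤ (p-1) * ((a+b)^(p-2)/4^(p-2)) * (b-a) := by
              apply mul_le_mul_of_nonneg_right _ (by linarith)
              exact mul_le_mul_of_nonneg_left hmono (by linarith)
          _ = (p-1) / 4^(p-2) * ((a+b)^(p-2) * (b-a)) := by ring
          _ ≤ max ((p-1) / 4 ^ (p-2)) (3 / 2 ^ (p-1)) * ((a+b)^(p-2)*(b-a)) := by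
              apply mul_le_mul_of_nonneg_right hmax
              exact mul_nonneg (rpow_nonneg (by linarith) _) (by linarith)
      · -- b > 3a : b^q - a^q ≤ b^q ≤ C (a+b)^{p-2}(b-a)
        have h2b : 2^(p-2) * b^(p-2) ≤ (a + b) ^ (p-2) := by
          rw [← mul_rpow (by norm_num) hb.le]
          exact rpow_le_rpow_of_nonpos (by linarith) (by linarith) hpm2
        have hbb : b ^ (p-2) * b = b ^ (p-1) := by
          have := rpow_mul_self_aux (a := b) (ha.trans hab) (r := p-2) (by intro h; linarith)
          rw [this, show p - 2 + 1 = p - 1 by ring]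
        have h2pos : (0:ℝ) < (2:ℝ)^(p-2) := rpow_pos_of_pos (by norm_num) _
        have hba : (2:ℝ)/3 * b ≤ b - a := by linarith
        have step : 2^(p-2) * b^(p-1) * (2/3) ≤ (a+b)^(p-2) * (b-a) := by
          calc 2^(p-2) * b^(p-1) * (2/3) = (2^(p-2) * b^(p-2)) * ((2:ℝ)/3 * b) := by
                rw [← hbb]; ring
            _ ≤ (a+b)^(p-2) * (b-a) := by
                apply mul_le_mul h2b hba (by positivity)
                  (rpow_nonneg (by linarith) _)
        have hC2 : (3:ℝ) / 2^(p-1) ≤ max ((p-1) / 4 ^ (p-2)) (3 / 2 ^ (p-1)) := le_max_right _ _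
        have hid : (3:ℝ) / 2^(p-1) * (2^(p-2) * b^(p-1) * (2/3)) = b^(p-1) := by
          have h21 : (2:ℝ)^(p-1) = 2^(p-2) * 2 := by
            rw [show p - 1 = p - 2 + 1 by ring, rpow_add_one (by norm_num : (2:ℝ) ≠ 0) (p-2)]
          rw [h21]; field_simp
        have hbq : b^(p-1) - a^(p-1) ≤ b^(p-1) := by
          have : (0:ℝ) ≤ a ^ (p-1) := rpow_nonneg ha _
          linarith
        calc b^(p-1) - a^(p-1) ≤ b^(p-1) := hbq
          _ = (3:ℝ) / 2^(p-1) * (2^(p-2) * b^(p-1) * (2/3)) := hid.symm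
          _ ≤ (3:ℝ) / 2^(p-1) * ((a+b)^(p-2)*(b-a)) := by
              apply mul_le_mul_of_nonneg_left step (by positivity)
          _ ≤ max ((p-1) / 4 ^ (p-2)) (3 / 2 ^ (p-1)) * ((a+b)^(p-2)*(b-a)) := by
              apply mul_le_mul_of_nonneg_right hC2
              exact mul_nonneg (rpow_nonneg (by linarith) _) (by linarith)


lemma affine_nonneg {α β s m : ℝ} (hs : -m ≤ s) (hs' : s ≤ m)
    (h1 : 0 ≤ α + β * m) (h2 : 0 ≤ α + β * (-m)) : 0 ≤ α + β * s := by
  rcases le_total 0 β with h | h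
  · nlinarith
  · nlinarith

lemma vector_compare (p : ℝ) (hp1 : 1 < p) {n : ℕ} :
    ∃ c1 C1 : ℝ, 0 < c1 ∧ 0 < C1 ∧ ∀ x y : EuclideanSpace ℝ (Fin n),
      c1 * ((‖x‖ + ‖y‖) ^ (p - 2) * ‖x - y‖ ^ 2)
          ≤ (inner ℝ (sigmaFlux p y - sigmaFlux p x) (y - x) : ℝ) ∧
      (inner ℝ (sigmaFlux p y - sigmaFlux p x) (y - x) : ℝ)
          ≤ C1 * ((‖x‖ + ‖y‖) ^ (p - 2) * ‖x - y‖ ^ 2) := by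
  obtain ⟨c, C, hc, hC, hS⟩ := scalar_core p hp1
  have h2pow : (0:ℝ) < 2 ^ (p - 1) := rpow_pos_of_pos (by norm_num) _
  refine ⟨min c (1 / 2 ^ (p - 1)), max C 2, lt_min hc (by positivity),
    lt_max_of_lt_right (by norm_num), ?_⟩
  set c1 := min c (1 / 2 ^ (p - 1)) with hc1def
  set C1 := max C (2:ℝ) with hC1def
  have hc1 : 0 < c1 := lt_min hc (by positivity)
  have hC1 : 0 < C1 := lt_max_of_lt_right (by norm_num)
  have aux : ∀ x y : EuclideanSpace ℝ (Fin n), ‖x‖ ≤ ‖y‖ →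
      c1 * ((‖x‖ + ‖y‖) ^ (p - 2) * ‖x - y‖ ^ 2)
          ≤ (inner ℝ (sigmaFlux p y - sigmaFlux p x) (y - x) : ℝ) ∧
      (inner ℝ (sigmaFlux p y - sigmaFlux p x) (y - x) : ℝ)
          ≤ C1 * ((‖x‖ + ‖y‖) ^ (p - 2) * ‖x - y‖ ^ 2) := by
    intro x y hab
    set a := ‖x‖ with hadef
    set b := ‖y‖ with hbdef
    have ha : 0 ≤ a := norm_nonneg x
    have hb : 0 ≤ b := norm_nonneg y
    have hI : (inner ℝ (sigmaFlux p y - sigmaFlux p x) (y - x) : ℝ)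
        = b ^ (p-2) * (b^2 - (inner ℝ x y : ℝ)) - a ^ (p-2) * ((inner ℝ x y : ℝ) - a^2) := by
      simp only [sigmaFlux, inner_sub_left, inner_sub_right, real_inner_smul_left]
      rw [real_inner_self_eq_norm_sq, real_inner_self_eq_norm_sq, real_inner_comm y x]
      ring
    have hnorm : ‖x - y‖^2 = a^2 - 2*(inner ℝ x y : ℝ) + b^2 := by
      rw [@norm_sub_sq_real]
    set s := (inner ℝ x y : ℝ) with hsdef
    have hsb : |s| ≤ a * b := abs_real_inner_le_norm x y
    obtain ⟨hs1, hs2⟩ := abs_le.mp hsb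
    -- abbreviations
    set A := a ^ (p-2) with hAdef
    set B := b ^ (p-2) with hBdef
    set D := (a+b) ^ (p-2) with hDdef
    set A1 := a ^ (p-1) with hA1def
    set B1 := b ^ (p-1) with hB1def
    have hpm1 : p - 2 + 1 = p - 1 := by ring
    have hne : p - 2 + 1 ≠ 0 := by rw [hpm1]; intro h; linarith
    have hA : A * a = A1 := by
      rw [hAdef, hA1def, rpow_mul_self_aux ha hne, hpm1]
    have hB : B * b = B1 := by
      rw [hBdef, hB1def, rpow_mul_self_aux hb hne, hpm1]
    have hD : D * (a+b) = (a+b) ^ (p-1) := by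
      rw [hDdef, rpow_mul_self_aux (by linarith) hne, hpm1]
    have hDn : 0 ≤ D := rpow_nonneg (by linarith) _
    -- scalar core at (a,b)
    obtain ⟨hSlow, hSup⟩ := hS a b ha hab
    -- endpoint s = ab (lower)
    have e1 : c1 * (D * (b-a)) * (b-a) ≤ (B1 - A1) * (b-a) := by
      apply mul_le_mul_of_nonneg_right _ (by linarith)
      calc c1 * (D * (b-a)) ≤ c * (D * (b-a)) := by
            apply mul_le_mul_of_nonneg_right (min_le_left _ _)
            exact mul_nonneg hDn (by linarith)
        _ ≤ B1 - A1 := hSlow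
    -- endpoint s = -ab (lower): c1 (a+b)^{p-1} ≤ A1 + B1
    have e2 : c1 * ((a+b)^(p-1)) * (a+b) ≤ (A1 + B1) * (a+b) := by
      apply mul_le_mul_of_nonneg_right _ (by linarith)
      have hstep : (a+b) ^ (p-1) ≤ 2^(p-1) * B1 := by
        rw [hB1def, ← mul_rpow (by norm_num) hb]
        exact rpow_le_rpow (by linarith) (by linarith) (by linarith)
      have hA1n : 0 ≤ A1 := rpow_nonneg ha _
      calc c1 * ((a+b)^(p-1)) ≤ (1 / 2^(p-1)) * ((a+b)^(p-1)) := by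
            apply mul_le_mul_of_nonneg_right (min_le_right _ _) (rpow_nonneg (by linarith) _)
        _ ≤ (1 / 2^(p-1)) * (2^(p-1) * B1) := by
            apply mul_le_mul_of_nonneg_left hstep (by positivity)
        _ = B1 := by field_simp
        _ ≤ A1 + B1 := by linarith
    -- endpoint s = ab (upper)
    have E1 : (B1 - A1) * (b-a) ≤ C1 * (D * (b-a)) * (b-a) := by
      apply mul_le_mul_of_nonneg_right _ (by linarith)
      calc B1 - A1 ≤ C * (D * (b-a)) := hSup
        _ ≤ C1 * (D * (b-a)) := by
            apply mul_le_mul_of_nonneg_right (le_max_left _ _)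
            exact mul_nonneg hDn (by linarith)
    -- endpoint s = -ab (upper)
    have E2 : (A1 + B1) * (a+b) ≤ C1 * ((a+b)^(p-1)) * (a+b) := by
      apply mul_le_mul_of_nonneg_right _ (by linarith)
      have h1 : A1 ≤ (a+b)^(p-1) := by
        rw [hA1def]; exact rpow_le_rpow ha (by linarith) (by linarith)
      have h2 : B1 ≤ (a+b)^(p-1) := by
        rw [hB1def]; exact rpow_le_rpow hb (by linarith) (by linarith)
      calc A1 + B1 ≤ 2 * ((a+b)^(p-1)) := by linarith
        _ ≤ C1 * ((a+b)^(p-1)) := by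
            apply mul_le_mul_of_nonneg_right (le_max_right _ _) (rpow_nonneg (by linarith) _)
    constructor
    · -- lower bound
      rw [hI, hnorm]
      have key : 0 ≤ (A*a^2 + B*b^2 - c1*(D*(a^2+b^2))) + (2*c1*D - (A+B)) * s := by
        apply affine_nonneg (m := a*b) hs1 hs2
        · -- s = ab
          have eq1 : (A*a^2 + B*b^2 - c1*(D*(a^2+b^2))) + (2*c1*D - (A+B)) * (a*b)
              = (B1 - A1) * (b-a) - c1 * (D * (b-a)) * (b-a) := by
            linear_combination (a - b) * hA + (b - a) * hB
          rw [eq1]; linarith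
        · have eq2 : (A*a^2 + B*b^2 - c1*(D*(a^2+b^2))) + (2*c1*D - (A+B)) * (-(a*b))
              = (A1 + B1) * (a+b) - c1 * (D * ((a+b)*(a+b))) := by
            linear_combination (a + b) * hA + (a + b) * hB
          rw [eq2]
          have : c1 * (D * ((a+b)*(a+b))) = c1 * ((a+b)^(p-1)) * (a+b) := by
            rw [← hD]; ring
          rw [this]; linarith
      linarith [key]
    · rw [hI, hnorm]
      have key : 0 ≤ (C1*(D*(a^2+b^2)) - (A*a^2 + B*b^2)) + ((A+B) - 2*C1*D) * s := by
        apply affine_nonneg (m := a*b) hs1 hs2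
        · have eq1 : (C1*(D*(a^2+b^2)) - (A*a^2 + B*b^2)) + ((A+B) - 2*C1*D) * (a*b)
              = C1 * (D * (b-a)) * (b-a) - (B1 - A1) * (b-a) := by
            linear_combination (b - a) * hA + (a - b) * hB
          rw [eq1]; linarith
        · have eq2 : (C1*(D*(a^2+b^2)) - (A*a^2 + B*b^2)) + ((A+B) - 2*C1*D) * (-(a*b))
              = C1 * (D * ((a+b)*(a+b))) - (A1 + B1) * (a+b) := by
            linear_combination (-(a + b)) * hA + (-(a + b)) * hB
          rw [eq2]
          have : C1 * (D * ((a+b)*(a+b))) = C1 * ((a+b)^(p-1)) * (a+b) := by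
            rw [← hD]; ring
          rw [this]; linarith
      linarith [key]
  intro x y
  rcases le_total ‖x‖ ‖y‖ with h | h
  · exact aux x y h
  · obtain ⟨h1, h2⟩ := aux y x h
    have hn : ‖y - x‖ = ‖x - y‖ := norm_sub_rev _ _
    have hcomm : ‖y‖ + ‖x‖ = ‖x‖ + ‖y‖ := add_comm _ _
    have hinner : (inner ℝ (sigmaFlux p x - sigmaFlux p y) (x - y) : ℝ)
        = (inner ℝ (sigmaFlux p y - sigmaFlux p x) (y - x) : ℝ) := by
      rw [← neg_sub (sigmaFlux p y) (sigmaFlux p x), ← neg_sub y x, inner_neg_neg]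
    rw [hn, hcomm, hinner] at h1 h2
    exact ⟨h1, h2⟩


lemma phi_compare (p : ℝ) (hp1 : 1 < p) :
    ∃ c3 C3 : ℝ, 0 < c3 ∧ 0 < C3 ∧ ∀ a t : ℝ, 0 ≤ a → 0 ≤ t →
      c3 * ((a + t) ^ (p - 2) * t ^ 2) ≤ phiShift p a t ∧
      phiShift p a t ≤ C3 * ((a + t) ^ (p - 2) * t ^ 2) := by
  have hp0 : 0 < p := by linarith
  set κ := min 1 ((2:ℝ) ^ (2 - p)) with hκdef
  have hκ : 0 < κ := lt_min one_pos (rpow_pos_of_pos (by norm_num) _)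
  set Cu := (1/2 + 1/p) * (1 + (2:ℝ) ^ (2 - p)) with hCudef
  have hCu : 0 < Cu := by positivity
  have hκCu : κ / 4 ≤ Cu := by
    have h1 : κ ≤ 1 := min_le_left _ _
    have h2 : (0:ℝ) < 1/p := by positivity
    have h3 : (0:ℝ) < (2:ℝ) ^ (2-p) := rpow_pos_of_pos (by norm_num) _
    nlinarith
  refine ⟨κ / 4, Cu, by positivity, hCu, ?_⟩
  intro a t ha ht
  rcases eq_or_lt_of_le ht with rfl | ht'
  · simp [phiShift]
  -- t > 0 from here on
  have hatpos : 0 < a + t := by linarith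
  have hDn : (0:ℝ) ≤ (a+t) ^ (p-2) := rpow_nonneg hatpos.le _
  rcases eq_or_lt_of_le ha with rfl | ha'
  · -- a = 0 : explicit computation
    have hEq : Set.EqOn (fun s => (0 + s) ^ (p-2) * s) (fun s : ℝ => s ^ (p-1))
        (Set.uIcc 0 t) := by
      intro s hs
      rw [Set.uIcc_of_le ht] at hs
      simp only [zero_add]
      rw [rpow_mul_self_aux hs.1 (by intro h; exact (by linarith : p - 2 + 1 ≠ 0) h),
        show p - 2 + 1 = p - 1 by ring]
    have hval : phiShift p 0 t = t ^ p / p := by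
      rw [phiShift, intervalIntegral.integral_congr hEq, integral_rpow (Or.inl (by linarith)),
        show p - 1 + 1 = p by ring, zero_rpow hp0.ne', sub_zero]
    have htp : (0 + t) ^ (p-2) * t^2 = t ^ p := by
      rw [zero_add, sq, ← mul_assoc, rpow_mul_self_aux ht (by intro h; linarith),
        show p - 2 + 1 = p - 1 by ring, rpow_mul_self_aux ht (by intro h; linarith),
        show p - 1 + 1 = p by ring]
    rw [hval, htp]
    have htppos : 0 < t ^ p := rpow_pos_of_pos ht' _
    constructor
    · have hk2 : κ ≤ (2:ℝ)^(2-p) := min_le_right _ _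
      have hb : (1:ℝ) + p ≤ 2 ^ p := by
        have h := one_add_mul_self_le_rpow_one_add (by norm_num : (-1:ℝ) ≤ 1) hp1.le
        norm_num at h
        linarith [h]
      have h2ppos : (0:ℝ) < 2 ^ p := rpow_pos_of_pos (by norm_num) _
      have h2p4 : (2:ℝ)^(2-p) * 2^p = 4 := by
        rw [← rpow_add (by norm_num : (0:ℝ) < 2)]; norm_num
      have e1 : κ * p ≤ 2^(2-p) * p := mul_le_mul_of_nonneg_right hk2 hp0.le
      have e2 : (2:ℝ)^(2-p) * p ≤ 2^(2-p) * 2^p := by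
        apply mul_le_mul_of_nonneg_left (by linarith) (rpow_nonneg (by norm_num) _)
      have e3 : κ * p ≤ 4 := by linarith
      have e4 : κ / 4 ≤ 1 / p := by
        rw [div_le_div_iff₀ (by norm_num) hp0]
        linarith
      calc κ / 4 * t ^ p ≤ (1/p) * t ^ p := mul_le_mul_of_nonneg_right e4 htppos.le
        _ = t ^ p / p := by ring
    · have : (1:ℝ)/p ≤ Cu := by
        have h3 : (0:ℝ) < (2:ℝ) ^ (2-p) := rpow_pos_of_pos (by norm_num) _
        have : (0:ℝ) < 1/p := by positivity
        nlinarith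
      calc t ^ p / p = (1/p) * t ^ p := by ring
        _ ≤ Cu * t ^ p := mul_le_mul_of_nonneg_right this htppos.le
  -- a > 0
  have hInt : ∀ u v : ℝ, 0 ≤ u → 0 ≤ v →
      IntervalIntegrable (fun s => (a + s) ^ (p-2) * s) MeasureTheory.volume u v := by
    intro u v hu hv
    apply ContinuousOn.intervalIntegrable
    apply ContinuousOn.mul _ continuousOn_id
    apply ContinuousOn.rpow_const
    · exact (continuous_const.add continuous_id).continuousOn
    · intro s hs
      left
      have : 0 ≤ s := by
        rcases Set.mem_uIcc.mp hs with ⟨h1, _⟩ | ⟨h1, _⟩ <;> linarith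
      positivity
  constructor
  · -- lower bound
    have hsplit : phiShift p a t
        = (∫ s in (0:ℝ)..(t/2), (a + s) ^ (p-2) * s) + ∫ s in (t/2)..t, (a + s) ^ (p-2) * s := by
      rw [phiShift, ← intervalIntegral.integral_add_adjacent_intervals
        (hInt 0 (t/2) le_rfl (by linarith)) (hInt (t/2) t (by linarith) ht)]
    have h1 : (0:ℝ) ≤ ∫ s in (0:ℝ)..(t/2), (a + s) ^ (p-2) * s := by
      apply intervalIntegral.integral_nonneg (by linarith)
      intro s hs
      exact mul_nonneg (rpow_nonneg (by linarith [hs.1]) _) hs.1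
    have h2 : (κ * ((a+t)^(p-2)) * (t/2)) * (t - t/2) ≤ ∫ s in (t/2)..t, (a + s) ^ (p-2) * s := by
      have := intervalIntegral.integral_mono_on (μ := MeasureTheory.volume)
        (f := fun _ : ℝ => κ * ((a+t)^(p-2)) * (t/2)) (g := fun s => (a + s) ^ (p-2) * s)
        (by linarith : t/2 ≤ t) (intervalIntegrable_const) (hInt (t/2) t (by linarith) ht) ?_
      · rw [intervalIntegral.integral_const] at this
        calc (κ * ((a+t)^(p-2)) * (t/2)) * (t - t/2)
            = (t - t/2) • (κ * ((a+t)^(p-2)) * (t/2)) := by rw [smul_eq_mul]; ring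
          _ ≤ _ := this
      · intro s hs
        obtain ⟨hs1, hs2⟩ := hs
        have hspos : 0 < s := by linarith
        have hkey : κ * (a+t)^(p-2) ≤ (a+s)^(p-2) := by
          rcases le_or_gt 2 p with hp2 | hp2
          · have hm : ((a+t)/2) ^ (p-2) ≤ (a+s) ^ (p-2) :=
              rpow_le_rpow (by linarith) (by linarith) (by linarith)
            rw [div_rpow hatpos.le (by norm_num)] at hm
            have h2p : ((2:ℝ)^(2-p)) * ((2:ℝ)^(p-2)) = 1 := by
              rw [← rpow_add (by norm_num : (0:ℝ) < 2)]; norm_num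
            have hk2 : κ ≤ (2:ℝ)^(2-p) := min_le_right _ _
            have h2pos : (0:ℝ) < (2:ℝ)^(p-2) := rpow_pos_of_pos (by norm_num) _
            calc κ * (a+t)^(p-2) ≤ (2:ℝ)^(2-p) * (a+t)^(p-2) :=
                  mul_le_mul_of_nonneg_right hk2 hDn
              _ = (a+t)^(p-2) / (2:ℝ)^(p-2) := by
                  rw [eq_div_iff h2pos.ne']
                  nlinarith [h2p]
              _ ≤ (a+s)^(p-2) := hm
          · have hm : (a+t) ^ (p-2) ≤ (a+s) ^ (p-2) :=
              rpow_le_rpow_of_nonpos (by linarith) (by linarith) (by linarith)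
            have hk1 : κ ≤ 1 := min_le_left _ _
            calc κ * (a+t)^(p-2) ≤ 1 * (a+t)^(p-2) := mul_le_mul_of_nonneg_right hk1 hDn
              _ = (a+t)^(p-2) := one_mul _
              _ ≤ (a+s)^(p-2) := hm
        calc κ * ((a+t)^(p-2)) * (t/2) ≤ (a+s)^(p-2) * (t/2) :=
              mul_le_mul_of_nonneg_right hkey (by linarith)
          _ ≤ (a+s)^(p-2) * s :=
              mul_le_mul_of_nonneg_left hs1 (rpow_nonneg (by linarith) _)
    rw [hsplit]
    have : κ / 4 * ((a+t)^(p-2) * t^2) = (κ * ((a+t)^(p-2)) * (t/2)) * (t - t/2) := by ring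
    rw [this]
    linarith
  · -- upper bound
    have hup : ∀ M : ℝ, 0 ≤ M → (∀ s ∈ Set.Icc (0:ℝ) t, (a+s)^(p-2) ≤ M) →
        phiShift p a t ≤ M * (t^2/2) := by
      intro M hM hle
      have := intervalIntegral.integral_mono_on (μ := MeasureTheory.volume)
        (f := fun s => (a + s) ^ (p-2) * s) (g := fun s : ℝ => M * s)
        ht (hInt 0 t le_rfl ht) ((continuous_const.mul continuous_id).intervalIntegrable 0 t) ?_
      · rw [intervalIntegral.integral_const_mul, integral_id] at this
        calc phiShift p a t ≤ M * ((t^2 - 0^2)/2) := this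
          _ = M * (t^2/2) := by norm_num
      · intro s hs
        exact mul_le_mul_of_nonneg_right (hle s hs) hs.1
    rcases le_or_gt 2 p with hp2 | hp2
    · have h := hup ((a+t)^(p-2)) hDn ?_
      · calc phiShift p a t ≤ (a+t)^(p-2) * (t^2/2) := h
          _ = (1/2) * ((a+t)^(p-2) * t^2) := by ring
          _ ≤ Cu * ((a+t)^(p-2) * t^2) := by
              apply mul_le_mul_of_nonneg_right _ (by positivity)
              have h3 : (0:ℝ) < (2:ℝ) ^ (2-p) := rpow_pos_of_pos (by norm_num) _
              have : (0:ℝ) < 1/p := by positivity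
              nlinarith
      · intro s hs
        exact rpow_le_rpow (by linarith [hs.1]) (by linarith [hs.2]) (by linarith)
    · rcases le_or_gt t a with hta | hta
      · -- t ≤ a
        have h2p : ((2:ℝ)^(2-p)) * ((2:ℝ)^(p-2)) = 1 := by
          rw [← rpow_add (by norm_num : (0:ℝ) < 2)]; norm_num
        have h2pos : (0:ℝ) < (2:ℝ)^(p-2) := rpow_pos_of_pos (by norm_num) _
        have h := hup ((2:ℝ)^(2-p) * (a+t)^(p-2)) (by positivity) ?_
        · calc phiShift p a t ≤ ((2:ℝ)^(2-p) * (a+t)^(p-2)) * (t^2/2) := h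
            _ = ((2:ℝ)^(2-p)/2) * ((a+t)^(p-2) * t^2) := by ring
            _ ≤ Cu * ((a+t)^(p-2) * t^2) := by
                apply mul_le_mul_of_nonneg_right _ (by positivity)
                have h3 : (0:ℝ) < (2:ℝ) ^ (2-p) := rpow_pos_of_pos (by norm_num) _
                have : (0:ℝ) < 1/p := by positivity
                nlinarith
        · intro s hs
          have hm : ((a+t)/2) ^ (p-2) ≥ (a+s) ^ (p-2) := by
            apply rpow_le_rpow_of_nonpos (by linarith) (by linarith [hs.1]) (by linarith)
          rw [div_rpow hatpos.le (by norm_num)] at hm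
          calc (a+s)^(p-2) ≤ (a+t)^(p-2) / (2:ℝ)^(p-2) := hm
            _ = (2:ℝ)^(2-p) * (a+t)^(p-2) := by
                rw [div_eq_iff h2pos.ne']
                nlinarith [h2p]
      · -- a < t
        have hle : ∀ s ∈ Set.Icc (0:ℝ) t, (a+s)^(p-2) * s ≤ s ^ (p-1) := by
          intro s hs
          rcases eq_or_lt_of_le hs.1 with rfl | hs'
          · simp [zero_rpow (show p - 1 ≠ 0 by intro h; linarith)]
          · have hm : (a+s)^(p-2) ≤ s^(p-2) :=
              rpow_le_rpow_of_nonpos hs' (by linarith) (by linarith)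
            calc (a+s)^(p-2) * s ≤ s^(p-2) * s :=
                  mul_le_mul_of_nonneg_right hm hs'.le
              _ = s ^ (p-1) := by
                  rw [rpow_mul_self_aux hs'.le (by intro h; linarith),
                    show p - 2 + 1 = p - 1 by ring]
        have hIntg : IntervalIntegrable (fun s : ℝ => s ^ (p-1)) MeasureTheory.volume 0 t :=
          intervalIntegral.intervalIntegrable_rpow' (by linarith)
        have hmono := intervalIntegral.integral_mono_on (μ := MeasureTheory.volume)
          (f := fun s => (a + s) ^ (p-2) * s) (g := fun s : ℝ => s ^ (p-1))
          ht (hInt 0 t le_rfl ht) hIntg hle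
        have hval : (∫ s in (0:ℝ)..t, s ^ (p-1)) = t ^ p / p := by
          rw [integral_rpow (Or.inl (by linarith)), show p - 1 + 1 = p by ring,
            zero_rpow hp0.ne', sub_zero]
        have htp2 : t ^ (p-2) ≤ (2:ℝ)^(2-p) * (a+t)^(p-2) := by
          have hm : (2*t) ^ (p-2) ≤ (a+t)^(p-2) :=
            rpow_le_rpow_of_nonpos hatpos (by linarith) (by linarith)
          rw [mul_rpow (by norm_num) ht] at hm
          have h2p : ((2:ℝ)^(2-p)) * ((2:ℝ)^(p-2)) = 1 := by
            rw [← rpow_add (by norm_num : (0:ℝ) < 2)]; norm_num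
          have h2pos' : (0:ℝ) < (2:ℝ)^(2-p) := rpow_pos_of_pos (by norm_num) _
          nlinarith [hm, rpow_nonneg ht (p-2)]
        have htpp : t ^ p = t^(p-2) * t^2 := by
          rw [sq, ← mul_assoc, rpow_mul_self_aux ht (by intro h; linarith),
            show p - 2 + 1 = p - 1 by ring, rpow_mul_self_aux ht (by intro h; linarith),
            show p - 1 + 1 = p by ring]
        calc phiShift p a t ≤ t ^ p / p := by rw [phiShift, ← hval]; exact hmono
          _ = (1/p) * (t^(p-2) * t^2) := by rw [htpp]; ring
          _ ≤ (1/p) * (((2:ℝ)^(2-p) * (a+t)^(p-2)) * t^2) := by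
              apply mul_le_mul_of_nonneg_left _ (by positivity)
              apply mul_le_mul_of_nonneg_right htp2 (sq_nonneg t)
          _ = ((2:ℝ)^(2-p)/p) * ((a+t)^(p-2) * t^2) := by ring
          _ ≤ Cu * ((a+t)^(p-2) * t^2) := by
              apply mul_le_mul_of_nonneg_right _ (by positivity)
              have h3 : (0:ℝ) < (2:ℝ) ^ (2-p) := rpow_pos_of_pos (by norm_num) _
              have h4 : (0:ℝ) < 1/p := by positivity
              have expand : (1/2+1/p)*(1+(2:ℝ)^(2-p))
                  = 1/2 + 2^(2-p)/2 + 1/p + 2^(2-p)/p := by ring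
              rw [hCudef, expand]
              have h5 : (0:ℝ) ≤ 2^(2-p)/2 := by positivity
              linarith


lemma ratio_rpow (r : ℝ) {u v : ℝ} (hu : 0 < u) (hv : 0 < v)
    (h1 : u ≤ 2 * v) (h2 : v ≤ 2 * u) : u ^ r ≤ 2 ^ |r| * v ^ r := by
  rcases le_or_gt 0 r with hr | hr
  · rw [abs_of_nonneg hr]
    calc u ^ r ≤ (2 * v) ^ r := rpow_le_rpow hu.le h1 hr
      _ = 2 ^ r * v ^ r := mul_rpow (by norm_num) hv.le
  · rw [abs_of_neg hr]
    have step : u ^ r ≤ (v / 2) ^ r :=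
      rpow_le_rpow_of_nonpos (by linarith) (by linarith) hr.le
    have h2pos : (0:ℝ) < (2:ℝ) ^ r := rpow_pos_of_pos (by norm_num) _
    have hmul : (2:ℝ) ^ (-r) * 2 ^ r = 1 := by
      rw [← rpow_add (by norm_num : (0:ℝ) < 2)]; norm_num
    calc u ^ r ≤ (v / 2) ^ r := step
      _ = v ^ r / 2 ^ r := by
          rw [div_rpow hv.le (by norm_num : (0:ℝ) ≤ 2)]
      _ = 2 ^ (-r) * v ^ r := by
          rw [rpow_neg (by norm_num : (0:ℝ) ≤ 2), div_eq_inv_mul]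

/-- `c φ_{|x|}(|x-y|) ≤ (σₙ(y) - σₙ(x)) · (y - x) ≤ C φ_{|x|}(|x-y|)`. -/
theorem power_flux_phi_equivalence (p : ℝ) (hp1 : 1 < p) (n : ℕ) (hn : 1 ≤ n) :
    ∃ c C : ℝ, 0 < c ∧ 0 < C ∧
      ∀ x y : EuclideanSpace ℝ (Fin n),
        c * phiShift p ‖x‖ ‖x - y‖ ≤ (inner ℝ (sigmaFlux p y - sigmaFlux p x) (y - x) : ℝ) ∧
        (inner ℝ (sigmaFlux p y - sigmaFlux p x) (y - x) : ℝ) ≤ C * phiShift p ‖x‖ ‖x - y‖ := by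
  obtain ⟨c1, C1, hc1, hC1, hV⟩ := vector_compare p hp1 (n := n)
  obtain ⟨c3, C3, hc3, hC3, hP⟩ := phi_compare p hp1
  set K := (2:ℝ) ^ |p - 2| with hKdef
  have hK : 0 < K := rpow_pos_of_pos (by norm_num) _
  refine ⟨c1 / (K * C3), C1 * K / c3, by positivity, by positivity, ?_⟩
  intro x y
  set a := ‖x‖ with hadef
  set b := ‖y‖ with hbdef
  set t := ‖x - y‖ with htdef
  have ha : 0 ≤ a := norm_nonneg x
  have hb : 0 ≤ b := norm_nonneg y
  have ht : 0 ≤ t := norm_nonneg _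
  obtain ⟨hV1, hV2⟩ := hV x y
  obtain ⟨hP1, hP2⟩ := hP a t ha ht
  rcases eq_or_lt_of_le ht with ht0 | ht'
  · -- t = 0, i.e. x = y
    have hxy : x = y := by
      have : x - y = 0 := by
        rw [← norm_eq_zero]; exact ht0.symm
      exact sub_eq_zero.mp this
    subst hxy
    have hphi0 : phiShift p a t = 0 := by
      rw [phiShift, ← ht0]
      exact intervalIntegral.integral_same
    rw [hphi0]
    simp
  · -- t > 0
    have hbt : b ≤ a + t := by
      calc b = ‖x - (x - y)‖ := by rw [hbdef]; congr 1; abel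
        _ ≤ a + t := norm_sub_le x (x - y)
    have htab : t ≤ a + b := norm_sub_le x y
    have hatpos : 0 < a + t := by linarith
    have habpos : 0 < a + b := by linarith
    have hR1 : (a + t) ^ (p-2) ≤ K * (a + b) ^ (p-2) :=
      ratio_rpow (p-2) hatpos habpos (by linarith) (by linarith)
    have hR2 : (a + b) ^ (p-2) ≤ K * (a + t) ^ (p-2) :=
      ratio_rpow (p-2) habpos hatpos (by linarith) (by linarith)
    have ht2 : (0:ℝ) ≤ t ^ 2 := sq_nonneg t
    constructor
    · calc c1 / (K * C3) * phiShift p a t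
          ≤ c1 / (K * C3) * (C3 * ((a+t)^(p-2) * t^2)) := by
            apply mul_le_mul_of_nonneg_left hP2 (by positivity)
        _ = (c1 / K) * ((a+t)^(p-2) * t^2) := by field_simp
        _ ≤ (c1 / K) * ((K * (a+b)^(p-2)) * t^2) := by
            apply mul_le_mul_of_nonneg_left _ (by positivity)
            exact mul_le_mul_of_nonneg_right hR1 ht2
        _ = c1 * ((a+b)^(p-2) * t^2) := by field_simp
        _ ≤ _ := hV1
    · calc (inner ℝ (sigmaFlux p y - sigmaFlux p x) (y - x) : ℝ)
          ≤ C1 * ((a+b)^(p-2) * t^2) := hV2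
        _ ≤ C1 * ((K * (a+t)^(p-2)) * t^2) := by
            apply mul_le_mul_of_nonneg_left _ hC1.le
            exact mul_le_mul_of_nonneg_right hR2 ht2
        _ = (C1 * K / c3) * (c3 * ((a+t)^(p-2) * t^2)) := by field_simp
        _ ≤ (C1 * K / c3) * phiShift p a t := by
            apply mul_le_mul_of_nonneg_left hP1 (by positivity)
end

section
/- Let p ∈ (1, ∞), let n ≥ 1 be an integer, and let σ_n : ℝ^n → ℝ^n be given by σ_n(x) = |x|^{p−2} x (with σ_n(0) = 0). There exists a constant C > 0, depending only on p, such that for all x, z ∈ ℝ^n: |σ_n(x) − σ_n(z)| ≤ C (|x| + |x − z|)^{p−2} |x − z|, where the right-hand side is interpreted as 0 when x = z. (In the notation of the shifted N-functions, the right-hand side equals C φ_{|x|}'(|x − z|).) -/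
open Real

lemma Real.rpow_le_three_mul_rpow {t u q : ℝ} (ht : 0 < t) (htu : t ≤ u) (hut : u ≤ 3 * t)
    (hq : -1 ≤ q) : t ^ q ≤ 3 * u ^ q := by
  rcases le_total 0 q with hq0 | hq0
  · have := rpow_le_rpow ht.le htu hq0
    nlinarith [rpow_nonneg (ht.le.trans htu) q]
  · calc t ^ q = 3 ^ (-q) * (3 * t) ^ q := by
          rw [mul_rpow (by norm_num) ht.le, ← mul_assoc, ← rpow_add (by norm_num)]
          simp
      _ ≤ 3 ^ (1 : ℝ) * u ^ q := by
          gcongr ?_ * ?_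
          · exact rpow_le_rpow_of_exponent_le (by norm_num) (by linarith)
          · exact rpow_le_rpow_of_nonpos (ht.trans_le htu) hut hq0
      _ = 3 * u ^ q := by rw [rpow_one]

section NormedSpace

variable {E : Type*} [NormedAddCommGroup E] [NormedSpace ℝ E]

lemma norm_norm_rpow_smul_self {q : ℝ} (hq : q + 1 ≠ 0) (x : E) :
    ‖‖x‖ ^ q • x‖ = ‖x‖ ^ (q + 1) := by
  rw [norm_smul, norm_of_nonneg (rpow_nonneg (norm_nonneg x) q), rpow_add_one' (norm_nonneg x) hq]

lemma norm_rpow_smul_sub_le_of_norm_le_two_mul {p : ℝ} (hp : 1 < p) {x z : E}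
    (hd : 0 < ‖x - z‖) (hfar : ‖x‖ ≤ 2 * ‖x - z‖) :
    ‖‖x‖ ^ (p - 2) • x - ‖z‖ ^ (p - 2) • z‖ ≤
      3 * (2 ^ (p - 1) + 3 ^ (p - 1)) * ((‖x‖ + ‖x - z‖) ^ (p - 2) * ‖x - z‖) := by
  have hp' : p - 2 + 1 = p - 1 := by ring
  have hz : ‖z‖ ≤ 3 * ‖x - z‖ := by linarith [norm_le_norm_add_norm_sub x z]
  calc _ ≤ ‖x‖ ^ (p - 1) + ‖z‖ ^ (p - 1) := by
        refine (norm_sub_le _ _).trans_eq ?_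
        rw [norm_norm_rpow_smul_self (by linarith), norm_norm_rpow_smul_self (by linarith), hp']
    _ ≤ (2 * ‖x - z‖) ^ (p - 1) + (3 * ‖x - z‖) ^ (p - 1) := by
        gcongr
    _ = (2 ^ (p - 1) + 3 ^ (p - 1)) * (‖x - z‖ ^ (p - 2) * ‖x - z‖) := by
        rw [mul_rpow (by norm_num) hd.le, mul_rpow (by norm_num) hd.le, ← hp',
          rpow_add_one' hd.le (by linarith)]
        ring
    _ ≤ (2 ^ (p - 1) + 3 ^ (p - 1)) * (3 * (‖x‖ + ‖x - z‖) ^ (p - 2) * ‖x - z‖) := by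
        gcongr
        exact rpow_le_three_mul_rpow hd (by linarith [norm_nonneg x]) (by linarith) (by linarith)
    _ = _ := by ring

end NormedSpace

section InnerProductSpace

variable {E : Type*} [NormedAddCommGroup E] [InnerProductSpace ℝ E]

lemma hasFDerivAt_norm_rpow_of_ne_zero (q : ℝ) {x : E} (hx : x ≠ 0) :
    HasFDerivAt (fun y : E ↦ ‖y‖ ^ q) ((q * ‖x‖ ^ (q - 2)) • innerSL ℝ x) x := by
  convert ((hasStrictFDerivAt_norm_sq x).hasFDerivAt.rpow_const (p := q / 2)
    (.inl (by simpa using hx))) using 1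
  · ext y
    simp_rw [← rpow_natCast_mul (norm_nonneg _)]
    ring_nf
  · simp_rw [← rpow_natCast_mul (norm_nonneg _), ← Nat.cast_smul_eq_nsmul ℝ, smul_smul]
    ring_nf

lemma exists_hasFDerivAt_norm_rpow_smul_self (q : ℝ) {x : E} (hx : x ≠ 0) :
    ∃ D : E →L[ℝ] E, HasFDerivAt (fun y : E ↦ ‖y‖ ^ q • y) D x ∧
      ‖D‖ ≤ (1 + |q|) * ‖x‖ ^ q := by
  refine ⟨_, (hasFDerivAt_norm_rpow_of_ne_zero q hx).smul (hasFDerivAt_id x), ?_⟩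
  have hx' : 0 < ‖x‖ := norm_pos_iff.mpr hx
  have hpow : ‖x‖ ^ (q - 2) * ‖x‖ * ‖x‖ = ‖x‖ ^ q := by
    rw [mul_assoc, ← sq, ← rpow_natCast, ← rpow_add hx']
    norm_num
  calc _ ≤ ‖‖x‖ ^ q • ContinuousLinearMap.id ℝ E‖
        + ‖((q * ‖x‖ ^ (q - 2)) • innerSL ℝ x).smulRight x‖ := norm_add_le _ _
    _ ≤ ‖x‖ ^ q * 1 + |q| * ‖x‖ ^ (q - 2) * ‖x‖ * ‖x‖ := by
        rw [ContinuousLinearMap.norm_smulRight_apply, norm_smul, norm_smul, innerSL_apply_norm,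
          norm_mul, norm_of_nonneg (rpow_nonneg (norm_nonneg x) _),
          norm_of_nonneg (rpow_nonneg (norm_nonneg x) _), Real.norm_eq_abs]
        gcongr
        exact ContinuousLinearMap.norm_id_le
    _ = (1 + |q|) * ‖x‖ ^ q := by rw [mul_assoc |q|, mul_assoc, hpow]; ring

lemma norm_rpow_smul_sub_le_of_two_mul_lt_norm {p : ℝ} (hp : 1 ≤ p) {x z : E}
    (hnear : 2 * ‖x - z‖ < ‖x‖) :
    ‖‖x‖ ^ (p - 2) • x - ‖z‖ ^ (p - 2) • z‖ ≤
      3 * (1 + |p - 2|) * ((‖x‖ + ‖x - z‖) ^ (p - 2) * ‖x - z‖) := by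
  set d := ‖x - z‖
  have hball : ∀ y ∈ Metric.closedBall x d, ‖x‖ - d ≤ ‖y‖ ∧ ‖y‖ ≤ ‖x‖ + d := fun y hy ↦ by
    rw [mem_closedBall_iff_norm] at hy
    exact ⟨by linarith [norm_sub_norm_le x y, norm_sub_rev x y],
      by linarith [norm_le_norm_add_norm_sub' y x]⟩
  have hderiv : ∀ y ∈ Metric.closedBall x d,
      HasFDerivWithinAt (fun w : E ↦ ‖w‖ ^ (p - 2) • w)
        (fderiv ℝ (fun w : E ↦ ‖w‖ ^ (p - 2) • w) y) (Metric.closedBall x d) y ∧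
      ‖fderiv ℝ (fun w : E ↦ ‖w‖ ^ (p - 2) • w) y‖ ≤
        3 * (1 + |p - 2|) * (‖x‖ + d) ^ (p - 2) := fun y hy ↦ by
    obtain ⟨hlow, hupp⟩ := hball y hy
    have hy0 : 0 < ‖y‖ := by linarith [norm_nonneg (x - z)]
    obtain ⟨D, hD, hDn⟩ := exists_hasFDerivAt_norm_rpow_smul_self (p - 2) (norm_pos_iff.mp hy0)
    rw [hD.fderiv]
    refine ⟨hD.hasFDerivWithinAt, hDn.trans ?_⟩
    rw [mul_comm 3, mul_assoc]
    gcongr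
    exact rpow_le_three_mul_rpow hy0 hupp (by linarith) (by linarith)
  have hz : z ∈ Metric.closedBall x d := by
    rw [mem_closedBall_iff_norm, norm_sub_rev]
  refine ((convex_closedBall x d).norm_image_sub_le_of_norm_hasFDerivWithin_le
    (fun y hy ↦ (hderiv y hy).1) (fun y hy ↦ (hderiv y hy).2) hz
    (Metric.mem_closedBall_self (norm_nonneg _))).trans_eq ?_
  ring

end InnerProductSpace

theorem power_flux_continuity_phi_general (p : ℝ) (hp1 : 1 < p) (n : ℕ) :
    ∃ C : ℝ, 0 < C ∧
      ∀ x z : EuclideanSpace ℝ (Fin n),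
        ‖sigmaFlux p x - sigmaFlux p z‖ ≤
          C * ((‖x‖ + ‖x - z‖) ^ (p - 2) * ‖x - z‖) := by
  refine ⟨3 * (2 ^ (p - 1) + 3 ^ (p - 1)) + 3 * (1 + |p - 2|), by positivity, fun x z ↦ ?_⟩
  rcases eq_or_ne x z with rfl | hxz
  · simp
  have hd : 0 < ‖x - z‖ := norm_pos_iff.mpr (sub_ne_zero.mpr hxz)
  rcases le_or_gt ‖x‖ (2 * ‖x - z‖) with hfar | hnear
  · refine (norm_rpow_smul_sub_le_of_norm_le_two_mul hp1 hd hfar).trans ?_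
    gcongr
    exact le_add_of_nonneg_right (by positivity)
  · refine (norm_rpow_smul_sub_le_of_two_mul_lt_norm hp1.le hnear).trans ?_
    gcongr
    exact le_add_of_nonneg_left (by positivity)

/-- `|σₙ(x) - σₙ(z)| ≤ C (|x| + |x-z|)^{p-2} |x-z| = C φ_{|x|}'(|x-z|)`. -/
theorem power_flux_continuity_phi (p : ℝ) (hp1 : 1 < p) (n : ℕ) (hn : 1 ≤ n) :
    ∃ C : ℝ, 0 < C ∧
      ∀ x z : EuclideanSpace ℝ (Fin n),
        ‖sigmaFlux p x - sigmaFlux p z‖ ≤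
          C * ((‖x‖ + ‖x - z‖) ^ (p - 2) * ‖x - z‖) :=
  power_flux_continuity_phi_general p hp1 n
end

section
/- Let p ∈ [2, ∞), let n ≥ 1 be an integer, and let σ_n : ℝ^n → ℝ^n be given by σ_n(x) = |x|^{p−2} x (with σ_n(0) = 0). There exists a constant c > 0, depending only on p, such that for all x, y ∈ ℝ^n: (σ_n(x) − σ_n(y)) · (x − y) ≥ c |x − y|^p. -/
/-- Strong monotonicity of `σₙ` for `p ≥ 2`:
`(σₙ(x) - σₙ(y)) · (x - y) ≥ c |x - y|^p`. -/
theorem power_flux_strong_monotonicity (p : ℝ) (hp : 2 ≤ p) (n : ℕ) (hn : 1 ≤ n) :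
    ∃ c : ℝ, 0 < c ∧
      ∀ x y : EuclideanSpace ℝ (Fin n),
        c * ‖x - y‖ ^ p ≤ (inner ℝ (sigmaFlux p x - sigmaFlux p y) (x - y) : ℝ) := by
  refine ⟨(2:ℝ) ^ (1 - p), Real.rpow_pos_of_pos two_pos _, fun x y => ?_⟩
  set a := ‖x‖ with ha
  set b := ‖y‖ with hb
  have ha0 : 0 ≤ a := norm_nonneg x
  have hb0 : 0 ≤ b := norm_nonneg y
  have hA0 : 0 ≤ a ^ (p - 2) := Real.rpow_nonneg ha0 _
  have hB0 : 0 ≤ b ^ (p - 2) := Real.rpow_nonneg hb0 _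
  have hinner : (inner ℝ (sigmaFlux p x - sigmaFlux p y) (x - y) : ℝ)
      = a ^ (p - 2) * a ^ 2 + b ^ (p - 2) * b ^ 2
        - (a ^ (p - 2) + b ^ (p - 2)) * (inner ℝ x y : ℝ) := by
    simp only [sigmaFlux, inner_sub_left, inner_sub_right, real_inner_smul_left,
      real_inner_self_eq_norm_sq, real_inner_comm y x, ← ha, ← hb]
    ring
  have hd2 : ‖x - y‖ ^ 2 = a ^ 2 - 2 * (inner ℝ x y : ℝ) + b ^ 2 := norm_sub_sq_real x y
  have h1 : 0 ≤ (a ^ (p - 2) - b ^ (p - 2)) * (a ^ 2 - b ^ 2) := by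
    rcases le_total a b with h | h
    · have h1 : a ^ (p - 2) ≤ b ^ (p - 2) := Real.rpow_le_rpow ha0 h (by linarith)
      nlinarith [mul_nonneg (sub_nonneg.mpr h1) (by nlinarith : (0:ℝ) ≤ b ^ 2 - a ^ 2)]
    · exact mul_nonneg
        (sub_nonneg.mpr (Real.rpow_le_rpow hb0 h (by linarith)))
        (by nlinarith)
  have key : (1/2) * (a ^ (p - 2) + b ^ (p - 2)) * ‖x - y‖ ^ 2
      ≤ (inner ℝ (sigmaFlux p x - sigmaFlux p y) (x - y) : ℝ) := by
    rw [hinner, hd2]; nlinarith [h1]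
  by_cases hxy : x = y
  · have : ‖x - y‖ = 0 := by simp [hxy]
    rw [this, Real.zero_rpow (by linarith : p ≠ 0), mul_zero]
    have h0 : ‖x - y‖ ^ 2 = 0 := by rw [this]; ring
    calc (0:ℝ) = (1/2) * (a ^ (p - 2) + b ^ (p - 2)) * ‖x - y‖ ^ 2 := by rw [h0]; ring
      _ ≤ _ := key
  · have hd : (0:ℝ) < ‖x - y‖ := by
      rw [norm_pos_iff]
      exact sub_ne_zero.mpr hxy
    have hle : ‖x - y‖ ≤ a + b := norm_sub_le x y
    have hmax : a + b ≤ 2 * max a b := by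
      have := le_max_left a b
      have := le_max_right a b
      linarith
    have h2 : ‖x - y‖ ^ (p - 2) ≤ 2 ^ (p - 2) * (a ^ (p - 2) + b ^ (p - 2)) := by
      calc ‖x - y‖ ^ (p - 2) ≤ (2 * max a b) ^ (p - 2) :=
            Real.rpow_le_rpow hd.le (hle.trans hmax) (by linarith)
        _ = 2 ^ (p - 2) * (max a b) ^ (p - 2) :=
            Real.mul_rpow (by norm_num) (le_max_of_le_left ha0)
        _ ≤ 2 ^ (p - 2) * (a ^ (p - 2) + b ^ (p - 2)) := by
            apply mul_le_mul_of_nonneg_left _ (by positivity)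
            rcases max_cases a b with ⟨h, _⟩ | ⟨h, _⟩ <;> rw [h] <;> linarith
    have hpow : ‖x - y‖ ^ p = ‖x - y‖ ^ (p - 2) * ‖x - y‖ ^ 2 := by
      rw [← Real.rpow_natCast ‖x - y‖ 2, ← Real.rpow_add hd]
      norm_num
    have hc : (2:ℝ) ^ (1 - p) * (2:ℝ) ^ (p - 2) = 1/2 := by
      rw [← Real.rpow_add two_pos]
      norm_num
    calc (2:ℝ) ^ (1 - p) * ‖x - y‖ ^ p
        = (2:ℝ) ^ (1 - p) * ‖x - y‖ ^ (p - 2) * ‖x - y‖ ^ 2 := by rw [hpow]; ring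
      _ ≤ (2:ℝ) ^ (1 - p) * (2 ^ (p - 2) * (a ^ (p - 2) + b ^ (p - 2))) * ‖x - y‖ ^ 2 := by
          apply mul_le_mul_of_nonneg_right _ (sq_nonneg _)
          exact mul_le_mul_of_nonneg_left h2 (by positivity)
      _ = (1/2) * (a ^ (p - 2) + b ^ (p - 2)) * ‖x - y‖ ^ 2 := by
          rw [← mul_assoc, hc]
      _ ≤ _ := key
end

section
/- Let p ∈ (1, 2), let n ≥ 1 be an integer, and let σ_n : ℝ^n → ℝ^n be given by σ_n(x) = |x|^{p−2} x (with σ_n(0) = 0). There exists a constant C > 0, depending only on p, such that for all x, y ∈ ℝ^n: |x − y|^p ≤ C [(σ_n(x) − σ_n(y)) · (x − y)]^{p/2} (|x|^p + |y|^p)^{1 − p/2}. -/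
private lemma bern_aux {q a b : ℝ} (hq0 : 0 < q) (hq1 : q < 1) (hb : 0 ≤ b) (hba : b ≤ a)
    (ha : 0 < a) : q * a ^ (q - 1) * (a - b) ≤ a ^ q - b ^ q := by
  have hs : (-1 : ℝ) ≤ b / a - 1 := by
    have : 0 ≤ b / a := div_nonneg hb ha.le
    linarith
  have hber := rpow_one_add_le_one_add_mul_self hs hq0.le hq1.le
  rw [add_sub_cancel] at hber
  have hmul := mul_le_mul_of_nonneg_right hber (Real.rpow_nonneg ha.le q)
  rw [← Real.mul_rpow (div_nonneg hb ha.le) ha.le, div_mul_cancel₀ _ ha.ne'] at hmul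
  have e1 : a ^ (q - 1) * a = a ^ q := by
    rw [← Real.rpow_add_one ha.ne' (q - 1)]; ring_nf
  have e2 : a ^ (q - 1) * b = (b / a) * a ^ q := by
    rw [← e1]; field_simp
  nlinarith [Real.rpow_nonneg ha.le q]

private lemma key_sorted {p : ℝ} (hp1 : 1 < p) (hp2 : p < 2) {a b t : ℝ} (hb : 0 ≤ b)
    (hba : b ≤ a) (ht : |t| ≤ a * b) :
    (p - 1) * (a ^ 2 + b ^ 2 - 2 * t) * (a + b) ^ (p - 2)
      ≤ a ^ (p - 2) * (a ^ 2 - t) + b ^ (p - 2) * (b ^ 2 - t) := by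
  have ha : 0 ≤ a := hb.trans hba
  rcases eq_or_lt_of_le hb with hb0 | hbpos
  · have ht0 : t = 0 := by
      rw [← hb0, mul_zero] at ht
      exact abs_eq_zero.mp (le_antisymm ht (abs_nonneg t))
    subst ht0
    rw [← hb0]
    rcases eq_or_lt_of_le ha with ha0 | hapos
    · rw [← ha0]
      rw [Real.zero_rpow (by intro h; exact absurd (by linarith : p = 2) (by linarith) : p - 2 ≠ 0)]
      norm_num
    · rw [Real.zero_rpow (by intro h; exact absurd (by linarith : p = 2) (by linarith) : p - 2 ≠ 0)]
      rw [add_zero]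
      nlinarith [Real.rpow_nonneg ha (p - 2), sq_nonneg a,
        mul_nonneg (Real.rpow_nonneg ha (p - 2)) (sq_nonneg a)]
  · have hapos : 0 < a := lt_of_lt_of_le hbpos hba
    have hS : 0 < a + b := by linarith
    have ea : a ^ (p - 2) * a = a ^ (p - 1) := by
      rw [← Real.rpow_add_one hapos.ne' (p - 2)]; ring_nf
    have eb : b ^ (p - 2) * b = b ^ (p - 1) := by
      rw [← Real.rpow_add_one hbpos.ne' (p - 2)]; ring_nf
    have eS : (a + b) ^ (p - 2) * (a + b) = (a + b) ^ (p - 1) := by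
      rw [← Real.rpow_add_one hS.ne' (p - 2)]; ring_nf
    have hSa : (a + b) ^ (p - 2) ≤ a ^ (p - 2) :=
      Real.rpow_le_rpow_of_nonpos hapos (by linarith) (by linarith)
    have hSb : (a + b) ^ (p - 2) ≤ b ^ (p - 2) :=
      Real.rpow_le_rpow_of_nonpos hbpos (by linarith) (by linarith)
    have hsub : (a + b) ^ (p - 1) ≤ a ^ (p - 1) + b ^ (p - 1) := by
      rw [← eS, ← ea, ← eb]
      nlinarith [mul_le_mul_of_nonneg_right hSa hapos.le,
        mul_le_mul_of_nonneg_right hSb hbpos.le]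
    have hbern : (p - 1) * a ^ (p - 2) * (a - b) ≤ a ^ (p - 1) - b ^ (p - 1) := by
      have := bern_aux (q := p - 1) (by linarith) (by linarith) hb hba hapos
      have h' : p - 1 - 1 = p - 2 := by ring
      rwa [h'] at this
    have E1 : (p - 1) * (a ^ 2 + b ^ 2 - 2 * (a * b)) * (a + b) ^ (p - 2)
        ≤ a ^ (p - 2) * (a ^ 2 - a * b) + b ^ (p - 2) * (b ^ 2 - a * b) := by
      have h1 : (p - 1) * (a + b) ^ (p - 2) * (a - b) ≤ a ^ (p - 1) - b ^ (p - 1) := by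
        have h2 : (p - 1) * (a + b) ^ (p - 2) * (a - b) ≤ (p - 1) * a ^ (p - 2) * (a - b) := by
          have := mul_le_mul_of_nonneg_right hSa (by linarith : (0:ℝ) ≤ a - b)
          nlinarith [this]
        linarith [hbern]
      have h3 := mul_le_mul_of_nonneg_right h1 (by linarith : (0:ℝ) ≤ a - b)
      calc (p - 1) * (a ^ 2 + b ^ 2 - 2 * (a * b)) * (a + b) ^ (p - 2)
          = (p - 1) * (a + b) ^ (p - 2) * (a - b) * (a - b) := by ring
        _ ≤ (a ^ (p - 1) - b ^ (p - 1)) * (a - b) := h3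
        _ = a ^ (p - 1) * a - a ^ (p - 1) * b - (b ^ (p - 1) * a - b ^ (p - 1) * b) := by ring
        _ = a ^ (p - 2) * (a ^ 2 - a * b) + b ^ (p - 2) * (b ^ 2 - a * b) := by
            rw [← ea, ← eb]; ring
    have E2 : (p - 1) * (a ^ 2 + b ^ 2 - 2 * (-(a * b))) * (a + b) ^ (p - 2)
        ≤ a ^ (p - 2) * (a ^ 2 - (-(a * b))) + b ^ (p - 2) * (b ^ 2 - (-(a * b))) := by
      have h1 : (p - 1) * (a + b) ^ (p - 1) ≤ a ^ (p - 1) + b ^ (p - 1) := by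
        have h0 : 0 ≤ (a + b) ^ (p - 1) := Real.rpow_nonneg hS.le _
        nlinarith [hsub]
      have h3 := mul_le_mul_of_nonneg_right h1 hS.le
      calc (p - 1) * (a ^ 2 + b ^ 2 - 2 * (-(a * b))) * (a + b) ^ (p - 2)
          = (p - 1) * ((a + b) ^ (p - 2) * (a + b)) * (a + b) := by ring
        _ = (p - 1) * (a + b) ^ (p - 1) * (a + b) := by rw [eS]
        _ ≤ (a ^ (p - 1) + b ^ (p - 1)) * (a + b) := h3
        _ = (a ^ (p - 1) * a + a ^ (p - 1) * b) + (b ^ (p - 1) * a + b ^ (p - 1) * b) := by ring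
        _ = a ^ (p - 2) * (a ^ 2 - (-(a * b))) + b ^ (p - 2) * (b ^ 2 - (-(a * b))) := by
            rw [← ea, ← eb]; ring
    obtain ⟨htl, htr⟩ := abs_le.mp ht
    nlinarith [mul_pos hapos hbpos, mul_nonneg (by linarith : (0:ℝ) ≤ a * b - t)
        (by linarith [E2] : (0:ℝ) ≤ a ^ (p - 2) * (a ^ 2 - (-(a * b))) + b ^ (p - 2) * (b ^ 2 - (-(a * b))) - (p - 1) * (a ^ 2 + b ^ 2 - 2 * (-(a * b))) * (a + b) ^ (p - 2)),
      mul_nonneg (by linarith : (0:ℝ) ≤ a * b + t)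
        (by linarith [E1] : (0:ℝ) ≤ a ^ (p - 2) * (a ^ 2 - a * b) + b ^ (p - 2) * (b ^ 2 - a * b) - (p - 1) * (a ^ 2 + b ^ 2 - 2 * (a * b)) * (a + b) ^ (p - 2))]

private lemma key_sym {p : ℝ} (hp1 : 1 < p) (hp2 : p < 2) {a b t : ℝ} (ha : 0 ≤ a) (hb : 0 ≤ b)
    (ht : |t| ≤ a * b) :
    (p - 1) * (a ^ 2 + b ^ 2 - 2 * t) * (a + b) ^ (p - 2)
      ≤ a ^ (p - 2) * (a ^ 2 - t) + b ^ (p - 2) * (b ^ 2 - t) := by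
  rcases le_total b a with h | h
  · exact key_sorted hp1 hp2 hb h ht
  · have := key_sorted hp1 hp2 (a := b) (b := a) (t := t) ha h (by rwa [mul_comm])
    have hc : b + a = a + b := by ring
    rw [hc] at this
    linarith

private lemma main_scalar {p : ℝ} (hp1 : 1 < p) (hp2 : p < 2) {a b D t K : ℝ}
    (ha : 0 ≤ a) (hb : 0 ≤ b) (hD : 0 ≤ D) (hS : 0 < a + b) (ht : |t| ≤ a * b)
    (hDsq : D ^ 2 = a ^ 2 + b ^ 2 - 2 * t)
    (hK : K = a ^ (p - 2) * (a ^ 2 - t) + b ^ (p - 2) * (b ^ 2 - t)) :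
    D ^ p ≤ ((p - 1)⁻¹) ^ (p / 2) * ((2 : ℝ) ^ p) ^ (1 - p / 2) * K ^ (p / 2)
        * (a ^ p + b ^ p) ^ (1 - p / 2) := by
  have hp1' : (0:ℝ) < p - 1 := by linarith
  have hKlow : (p - 1) * D ^ 2 * (a + b) ^ (p - 2) ≤ K := by
    rw [hK, hDsq]
    exact key_sym hp1 hp2 ha hb ht
  have hKnn : 0 ≤ K :=
    le_trans (mul_nonneg (mul_nonneg hp1'.le (sq_nonneg D)) (Real.rpow_nonneg hS.le _)) hKlow
  have eSS : (a + b) ^ (p - 2) * (a + b) ^ (2 - p) = 1 := by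
    rw [← Real.rpow_add hS]; norm_num
  have h3 := mul_le_mul_of_nonneg_right hKlow (Real.rpow_nonneg hS.le (2 - p))
  have h4 : (p - 1) * D ^ 2 * (a + b) ^ (p - 2) * (a + b) ^ (2 - p) = (p - 1) * D ^ 2 := by
    rw [mul_assoc ((p - 1) * D ^ 2), eSS, mul_one]
  rw [h4] at h3
  have h5 : D ^ 2 ≤ (p - 1)⁻¹ * (K * (a + b) ^ (2 - p)) := by
    have h6 := mul_le_mul_of_nonneg_left h3 (inv_nonneg.mpr hp1'.le)
    rwa [← mul_assoc, inv_mul_cancel₀ hp1'.ne', one_mul] at h6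
  have h7 := Real.rpow_le_rpow (sq_nonneg D) h5 (by positivity : (0:ℝ) ≤ p / 2)
  have hLHS : ((D ^ 2 : ℝ)) ^ (p / 2) = D ^ p := by
    rw [← Real.rpow_natCast D 2, ← Real.rpow_mul hD]
    congr 1
    push_cast
    ring
  have hRHS : ((p - 1)⁻¹ * (K * (a + b) ^ (2 - p))) ^ (p / 2)
      = ((p - 1)⁻¹) ^ (p / 2) * K ^ (p / 2) * ((a + b) ^ (2 - p)) ^ (p / 2) := by
    rw [Real.mul_rpow (by positivity) (mul_nonneg hKnn (Real.rpow_nonneg hS.le _)),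
      Real.mul_rpow hKnn (Real.rpow_nonneg hS.le _), mul_assoc]
  rw [hLHS, hRHS] at h7
  have hSp : (a + b) ^ p ≤ 2 ^ p * (a ^ p + b ^ p) := by
    have h2p : (0:ℝ) < 2 ^ p := Real.rpow_pos_of_pos (by norm_num) p
    rcases le_total a b with h | h
    · calc (a + b) ^ p ≤ (2 * b) ^ p :=
            Real.rpow_le_rpow hS.le (by linarith) (by linarith)
        _ = 2 ^ p * b ^ p := Real.mul_rpow (by norm_num) hb
        _ ≤ 2 ^ p * (a ^ p + b ^ p) := by
            nlinarith [Real.rpow_nonneg ha p]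
    · calc (a + b) ^ p ≤ (2 * a) ^ p :=
            Real.rpow_le_rpow hS.le (by linarith) (by linarith)
        _ = 2 ^ p * a ^ p := Real.mul_rpow (by norm_num) ha
        _ ≤ 2 ^ p * (a ^ p + b ^ p) := by
            nlinarith [Real.rpow_nonneg hb p]
  have hexp : ((a + b) ^ (2 - p)) ^ (p / 2) = ((a + b) ^ p) ^ (1 - p / 2) := by
    rw [← Real.rpow_mul hS.le, ← Real.rpow_mul hS.le]
    congr 1
    ring
  have hSp2 : ((a + b) ^ p) ^ (1 - p / 2)
      ≤ (2 ^ p) ^ (1 - p / 2) * (a ^ p + b ^ p) ^ (1 - p / 2) := by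
    have hab_nn : (0:ℝ) ≤ a ^ p + b ^ p :=
      add_nonneg (Real.rpow_nonneg ha p) (Real.rpow_nonneg hb p)
    calc ((a + b) ^ p) ^ (1 - p / 2)
        ≤ (2 ^ p * (a ^ p + b ^ p)) ^ (1 - p / 2) :=
          Real.rpow_le_rpow (Real.rpow_nonneg hS.le _) hSp (by linarith)
      _ = (2 ^ p) ^ (1 - p / 2) * (a ^ p + b ^ p) ^ (1 - p / 2) :=
          Real.mul_rpow (Real.rpow_nonneg (by norm_num) _) hab_nn
  have hfac : (0:ℝ) ≤ ((p - 1)⁻¹) ^ (p / 2) * K ^ (p / 2) :=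
    mul_nonneg (Real.rpow_nonneg (by positivity) _) (Real.rpow_nonneg hKnn _)
  calc D ^ p ≤ ((p - 1)⁻¹) ^ (p / 2) * K ^ (p / 2) * ((a + b) ^ (2 - p)) ^ (p / 2) := h7
    _ = ((p - 1)⁻¹) ^ (p / 2) * K ^ (p / 2) * ((a + b) ^ p) ^ (1 - p / 2) := by rw [hexp]
    _ ≤ ((p - 1)⁻¹) ^ (p / 2) * K ^ (p / 2)
        * ((2 ^ p) ^ (1 - p / 2) * (a ^ p + b ^ p) ^ (1 - p / 2)) :=
        mul_le_mul_of_nonneg_left hSp2 hfac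
    _ = ((p - 1)⁻¹) ^ (p / 2) * ((2:ℝ) ^ p) ^ (1 - p / 2) * K ^ (p / 2)
        * (a ^ p + b ^ p) ^ (1 - p / 2) := by ring

/-- Monotonicity-type estimate for `1 < p < 2`:
`|x - y|^p ≤ C [(σₙ(x) - σₙ(y)) · (x - y)]^{p/2} (|x|^p + |y|^p)^{1 - p/2}`. -/
theorem power_flux_monotonicity_sublinear (p : ℝ) (hp1 : 1 < p) (hp2 : p < 2)
    (n : ℕ) (hn : 1 ≤ n) :
    ∃ C : ℝ, 0 < C ∧
      ∀ x y : EuclideanSpace ℝ (Fin n),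
        ‖x - y‖ ^ p ≤
          C * ((inner ℝ (sigmaFlux p x - sigmaFlux p y) (x - y) : ℝ)) ^ (p / 2) *
            (‖x‖ ^ p + ‖y‖ ^ p) ^ (1 - p / 2) := by
  refine ⟨((p - 1)⁻¹) ^ (p / 2) * ((2 : ℝ) ^ p) ^ (1 - p / 2), ?_, ?_⟩
  · exact mul_pos (Real.rpow_pos_of_pos (inv_pos.mpr (by linarith)) _)
      (Real.rpow_pos_of_pos (Real.rpow_pos_of_pos (by norm_num) _) _)
  intro x y
  by_cases hxy : x = y
  · subst hxy
    have h0 : (inner ℝ (sigmaFlux p x - sigmaFlux p x) (x - x) : ℝ) = 0 := by simp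
    rw [h0, sub_self, norm_zero, Real.zero_rpow (ne_of_gt (by linarith : (0:ℝ) < p)),
      Real.zero_rpow (ne_of_gt (by linarith : (0:ℝ) < p / 2)), mul_zero, zero_mul]
  · have hinner : (inner ℝ (sigmaFlux p x - sigmaFlux p y) (x - y) : ℝ)
        = ‖x‖ ^ (p - 2) * (‖x‖ ^ 2 - inner ℝ x y) + ‖y‖ ^ (p - 2) * (‖y‖ ^ 2 - inner ℝ x y) := by
      simp only [sigmaFlux, inner_sub_left, inner_sub_right, real_inner_smul_left,
        real_inner_self_eq_norm_sq, real_inner_comm y x]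
      ring
    have hS : 0 < ‖x‖ + ‖y‖ := by
      rcases lt_or_ge 0 (‖x‖ + ‖y‖) with h | h
      · exact h
      · exfalso
        have ha0 : ‖x‖ = 0 := le_antisymm (by linarith [norm_nonneg y]) (norm_nonneg x)
        have hb0 : ‖y‖ = 0 := le_antisymm (by linarith [norm_nonneg x]) (norm_nonneg y)
        exact hxy ((norm_eq_zero.mp ha0).trans (norm_eq_zero.mp hb0).symm)
    have hDsq : ‖x - y‖ ^ 2 = ‖x‖ ^ 2 + ‖y‖ ^ 2 - 2 * (inner ℝ x y : ℝ) := by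
      rw [norm_sub_sq_real]; ring
    have := main_scalar hp1 hp2 (norm_nonneg x) (norm_nonneg y) (norm_nonneg (x - y)) hS
      (abs_real_inner_le_norm x y) hDsq hinner
    linarith [this]
end
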